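/- arXiv:1411.6776 — 5 statements merged into one kernel-verified Lean document; each statement's English description precedes it below -/
import Mathlib

section
/- Let X ⊆ ℂ be a continuum such that ℂ \ X has finitely many connected components. If X is not locally connected at some point x ∈ X (i.e., there is a neighborhood of x in X containing no connected neighborhood of x in X), then the fiber F_x is nontrivial: F_x ≠ {x}. -/
open Set Topology OnePoint

noncomputable section

/-- The set of connected components of a subset `S`. -/
def comps {α : Type*} [TopologicalSpace α] (S : Set α) : Set (Set α) :=
  {C | ∃ z ∈ S, C = connectedComponentIn S z}

/-- A simple closed curve in the extended plane: the image of an injective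
continuous map from the unit circle. -/
def IsSimpleClosedCurve (γ : Set (OnePoint ℂ)) : Prop :=
  ∃ f : (Metric.sphere (0 : ℂ) 1) → OnePoint ℂ,
    Continuous f ∧ Function.Injective f ∧ γ = Set.range f

/-- A subset of `ℂ` viewed inside the extended plane. -/
def emb (X : Set ℂ) : Set (OnePoint ℂ) :=
  (fun z : ℂ => (z : OnePoint ℂ)) '' X

/-- A good cut of `X`. -/
def IsGoodCut (X : Set ℂ) (γ : Set (OnePoint ℂ)) : Prop :=
  IsSimpleClosedCurve γ ∧ (γ ∩ emb (frontier X)).Nonempty ∧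
    (γ ∩ emb (frontier X)).Finite ∧ (γ \ emb X).Nonempty

/-- `x` and `y` lie in distinct connected components of `ℂ \ γ`. -/
def SeparatedBy (γ : Set (OnePoint ℂ)) (x y : ℂ) : Prop :=
  x ∈ {z : ℂ | (z : OnePoint ℂ) ∉ γ} ∧ y ∈ {z : ℂ | (z : OnePoint ℂ) ∉ γ} ∧
    connectedComponentIn {z : ℂ | (z : OnePoint ℂ) ∉ γ} x ≠
      connectedComponentIn {z : ℂ | (z : OnePoint ℂ) ∉ γ} y

/-- The pseudo-fiber `E_x`. -/
def pseudoFiber (X : Set ℂ) (x : ℂ) : Set ℂ :=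
  {y | y ∈ X ∧ ¬ ∃ γ : Set (OnePoint ℂ), IsGoodCut X γ ∧ SeparatedBy γ x y}

/-- The fiber `F_x`. -/
def fiber (X : Set ℂ) (x : ℂ) : Set ℂ :=
  connectedComponentIn (pseudoFiber X x) x


/-!
If `X` is not locally connected at `x`, there are `R > 0` and points `xₙ → x` of `X` outside
the component of `x` in `X ∩ B̄(x, R)`. By boundary bumping the component `Cₙ` of `xₙ` in
`X ∩ B̄(x, R/2)` reaches the sphere `S(x, R/2)`, so the upper limit of the `Cₙ` contains a
continuum `L` joining `x` to that sphere, and `L ⊆ F_x` gives a nontrivial fiber.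

Every `z ∈ L` lies in the pseudo-fiber `E_x`. Otherwise a good cut `γ` separates `x` from `z`. For
each `r ∈ [R/2, R]`, infinitely many distinct components of `X ∩ B̄(x, r)` come close to both `x`
and `z`, so each of them crosses `γ`. Let `v` be an accumulation point of crossing points taken
in distinct components. If `v` were interior to `X` or to the ball, the crossings near `v` would
all lie in the component of `v`, which is absurd. For `v ∈ ∂X` inside the ball this holds because
arcs of `γ` near `v` meet `∂X` only at `v`, so they stay on one side of `∂X`, and the circle is
locally connected. Hence `v ∈ γ ∩ ∂X` with `|v - x| = r`. This gives uncountably many points of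
`γ ∩ ∂X`, which is impossible.
-/

open Filter Metric

section GeneralTopology

variable {α : Type*} [TopologicalSpace α]

theorem IsClosed.connectedComponentIn {F : Set α} (hF : IsClosed F) (x : α) :
    IsClosed (connectedComponentIn F x) := by
  by_cases hx : x ∈ F
  · refine closure_subset_iff_isClosed.1 <|
      isPreconnected_connectedComponentIn.closure.subset_connectedComponentIn
        (subset_closure (mem_connectedComponentIn hx)) ?_
    exact closure_minimal (connectedComponentIn_subset _ _) hF
  · rw [connectedComponentIn_eq_empty hx]
    exact isClosed_empty

theorem IsPreconnected.subset_of_isClosed_inter {P K O : Set α} (hP : IsPreconnected P)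
    (hPK : P ⊆ K) (hO : IsOpen O) (hKO : IsClosed (K ∩ O)) (hne : (P ∩ O).Nonempty) :
    P ⊆ O := by
  refine (isPreconnected_iff_subset_of_disjoint.1 hP O (K ∩ O)ᶜ hO hKO.isOpen_compl
    (fun p _ => (em (p ∈ O)).imp id fun h h' => h h'.2) ?_).resolve_right ?_
  · exact eq_empty_of_forall_notMem fun p ⟨hpP, hpO, hpKO⟩ => hpKO ⟨hPK hpP, hpO⟩
  · obtain ⟨p, hpP, hpO⟩ := hne
    exact fun h => h hpP ⟨hPK hpP, hpO⟩

theorem not_subset_of_mem_connectedComponentIn {P F : Set α} {x z p q : α}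
    (hP : IsPreconnected P) (hp : p ∈ P ∩ connectedComponentIn F x)
    (hq : q ∈ P ∩ connectedComponentIn F z)
    (hne : connectedComponentIn F x ≠ connectedComponentIn F z) : ¬ P ⊆ F := by
  intro hPF
  have hq' : q ∈ connectedComponentIn F x :=
    connectedComponentIn_eq hp.2 ▸ hP.subset_connectedComponentIn hp.1 hPF hq.1
  exact hne ((connectedComponentIn_eq hq').trans (connectedComponentIn_eq hq.2).symm)

theorem exists_isClopen_subset_of_connectedComponent_subset [CompactSpace α] [T2Space α]
    {x : α} {U : Set α} (hU : IsOpen U) (h : connectedComponent x ⊆ U) :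
    ∃ V, IsClopen V ∧ x ∈ V ∧ V ⊆ U := by
  let N := {s : Set α // IsClopen s ∧ x ∈ s}
  have : Nonempty N := ⟨⟨univ, isClopen_univ, mem_univ x⟩⟩
  have hdir : Directed (· ⊇ ·) fun s : N => s.1 := fun s t =>
    ⟨⟨s.1 ∩ t.1, s.2.1.inter t.2.1, s.2.2, t.2.2⟩, inter_subset_left, inter_subset_right⟩
  rw [connectedComponent_eq_iInter_isClopen] at h
  obtain ⟨⟨V, hV, hxV⟩, hVU⟩ := exists_subset_nhds_of_compactSpace hdir (fun s => s.2.1.1)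
    fun y hy => hU.mem_nhds (h hy)
  exact ⟨V, hV, hxV, hVU⟩

/-- `K ∩ O` is a relatively clopen neighbourhood of `a` in `K` missing `S`. -/
theorem IsCompact.exists_isOpen_disjoint_of_disjoint_connectedComponentIn [T2Space α]
    {K S : Set α} {a : α} (hK : IsCompact K) (ha : a ∈ K) (hS : IsClosed S)
    (h : Disjoint (connectedComponentIn K a) S) :
    ∃ O, IsOpen O ∧ a ∈ O ∧ Disjoint O S ∧ IsClosed (K ∩ O) := by
  have := isCompact_iff_compactSpace.1 hK
  have hcc : connectedComponent (⟨a, ha⟩ : K) ⊆ (Subtype.val ⁻¹' S)ᶜ := fun b hb hbS =>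
    h.ne_of_mem (connectedComponentIn_eq_image ha ▸ mem_image_of_mem _ hb) hbS rfl
  obtain ⟨Z, hZ, haZ, hZS⟩ := exists_isClopen_subset_of_connectedComponent_subset
    (hS.preimage continuous_subtype_val).isOpen_compl hcc
  obtain ⟨O, hO, rfl⟩ := isOpen_induced_iff.1 hZ.isOpen
  have hKO : K ∩ (O \ S) = Subtype.val '' (Subtype.val ⁻¹' O : Set K) := by
    rw [Subtype.image_preimage_coe]
    exact subset_antisymm (inter_subset_inter_right _ sdiff_subset)
      fun b ⟨hbK, hbO⟩ => ⟨hbK, hbO, hZS (a := ⟨b, hbK⟩) hbO⟩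
  refine ⟨O \ S, hO.sdiff hS, ⟨haZ, hZS haZ⟩, disjoint_sdiff_left, ?_⟩
  rw [hKO]
  exact (hZ.isClosed.isCompact.image continuous_subtype_val).isClosed

/-- The boundary bumping theorem. -/
theorem connectedComponentIn_inter_frontier_nonempty [T2Space α] {X F : Set α} {a : α}
    (hXc : IsPreconnected X) (hX : IsCompact X) (hF : IsClosed F) (ha : a ∈ X ∩ F)
    (hXF : ¬ X ⊆ interior F) : (connectedComponentIn (X ∩ F) a ∩ frontier F).Nonempty := by
  rw [← not_disjoint_iff_nonempty_inter]
  intro h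
  have h' : Disjoint (connectedComponentIn (X ∩ F) a) (interior F)ᶜ := by
    refine disjoint_left.2 fun b hb hbF => h.ne_of_mem hb ?_ rfl
    rw [hF.frontier_eq]
    exact ⟨(connectedComponentIn_subset _ _ hb).2, hbF⟩
  obtain ⟨O, hO, haO, hOS, hKO⟩ :=
    (hX.inter_right hF).exists_isOpen_disjoint_of_disjoint_connectedComponentIn
      ha isOpen_interior.isClosed_compl h'
  have hOF : O ⊆ interior F := fun b hb => not_not.1 (hOS.ne_of_mem hb · rfl)
  have hXO : X ∩ O = X ∩ F ∩ O := by
    rw [inter_assoc, inter_eq_right.2 (hOF.trans interior_subset)]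
  exact hXF ((hXc.subset_of_isClosed_inter subset_rfl hO (hXO ▸ hKO) ⟨a, ha.1, haO⟩).trans hOF)

theorem IsCompact.connectedComponentIn_inter_nonempty_of_tendsto [T2Space α] {K S : Set α}
    (hK : IsCompact K) (hS : IsClosed S) {P : ℕ → Set α} (hPK : ∀ n, P n ⊆ K)
    (hP : ∀ n, IsPreconnected (P n)) (hPS : ∀ n, (P n ∩ S).Nonempty) {p : ℕ → α} {a : α}
    (hp : ∀ n, p n ∈ P n) (hpa : Tendsto p atTop (𝓝 a)) :
    (connectedComponentIn K a ∩ S).Nonempty := by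
  have ha : a ∈ K := hK.isClosed.mem_of_tendsto hpa (Eventually.of_forall fun n => hPK n (hp n))
  rw [← not_disjoint_iff_nonempty_inter]
  intro h
  obtain ⟨O, hO, haO, hOS, hKO⟩ :=
    hK.exists_isOpen_disjoint_of_disjoint_connectedComponentIn ha hS h
  obtain ⟨n, hn⟩ := (hpa.eventually (hO.mem_nhds haO)).exists
  obtain ⟨b, hbP, hbS⟩ := hPS n
  exact hOS.ne_of_mem ((hP n).subset_of_isClosed_inter (hPK n) hO hKO ⟨p n, hp n, hn⟩ hbP) hbS rfl

theorem isPreconnected_iInter_of_directed [T2Space α] {ι : Type*} [Nonempty ι]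
    {L : ι → Set α} (hdir : Directed (· ⊇ ·) L) (hcpt : ∀ i, IsCompact (L i))
    (hpre : ∀ i, IsPreconnected (L i)) : IsPreconnected (⋂ i, L i) := by
  rw [isPreconnected_iff_subset_of_fully_disjoint_closed
    (isClosed_iInter fun i => (hcpt i).isClosed)]
  intro u v hu hv huv hdisj
  obtain ⟨i₀⟩ := ‹Nonempty ι›
  obtain ⟨U, V, hU, hV, huU, hvV, hUV⟩ := SeparatedNhds.of_isCompact_isCompact
    ((hcpt i₀).inter_left hu) ((hcpt i₀).inter_left hv)
    (hdisj.mono inter_subset_left inter_subset_left)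
  have hsub : ∀ y ∈ ⋂ i, L i, y ∈ U ∪ V := fun y hy =>
    (huv hy).imp (fun h => huU ⟨h, mem_iInter.1 hy i₀⟩) fun h => hvV ⟨h, mem_iInter.1 hy i₀⟩
  obtain ⟨i, hi⟩ := exists_subset_nhds_of_isCompact' hdir hcpt (fun i => (hcpt i).isClosed)
    fun y hy => (hU.union hV).mem_nhds (hsub y hy)
  have hLi : ∀ y ∈ ⋂ i, L i, y ∈ L i := fun y hy => mem_iInter.1 hy i
  rcases isPreconnected_iff_subset_of_disjoint.1 (hpre i) U V hU hV hi
    (by rw [hUV.inter_eq, inter_empty]) with h | h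
  · exact Or.inl fun y hy => (huv hy).resolve_right fun hyv =>
      hUV.ne_of_mem (h (hLi y hy)) (hvV ⟨hyv, mem_iInter.1 hy i₀⟩) rfl
  · exact Or.inr fun y hy => (huv hy).resolve_left fun hyu =>
      hUV.ne_of_mem (huU ⟨hyu, mem_iInter.1 hy i₀⟩) (h (hLi y hy)) rfl

end GeneralTopology

section UpperLimit

variable {α : Type*} [TopologicalSpace α]

/-- The topological upper limit `Ls Cₙ` of a sequence of sets. -/
def upperLimit (C : ℕ → Set α) : Set α :=
  ⋂ N, closure (⋃ n ≥ N, C n)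

theorem mem_upperLimit_iff {C : ℕ → Set α} {z : α} :
    z ∈ upperLimit C ↔ ∀ V ∈ 𝓝 z, ∃ᶠ n in atTop, (C n ∩ V).Nonempty := by
  simp only [upperLimit, mem_iInter, mem_closure_iff_nhds, frequently_atTop]
  refine ⟨fun h V hV N => ?_, fun h N V hV => ?_⟩
  · obtain ⟨y, hyV, hy⟩ := h N V hV
    obtain ⟨n, hn, hyC⟩ := mem_iUnion₂.1 hy
    exact ⟨n, hn, y, hyC, hyV⟩
  · obtain ⟨n, hn, y, hyC, hyV⟩ := h V hV N
    exact ⟨y, hyV, mem_iUnion₂.2 ⟨n, hn, hyC⟩⟩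

theorem upperLimit_mono {C D : ℕ → Set α} (h : ∀ n, C n ⊆ D n) :
    upperLimit C ⊆ upperLimit D :=
  iInter_mono fun _ => closure_mono (iUnion₂_mono fun n _ => h n)

theorem exists_isPreconnected_subset_upperLimit [T2Space α] {K S : Set α} (hK : IsCompact K)
    (hS : IsClosed S) {C : ℕ → Set α} (hCK : ∀ n, C n ⊆ K) (hC : ∀ n, IsPreconnected (C n))
    (hCS : ∀ n, (C n ∩ S).Nonempty) {p : ℕ → α} {x : α} (hp : ∀ n, p n ∈ C n)
    (hpx : Tendsto p atTop (𝓝 x)) :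
    ∃ L, IsPreconnected L ∧ x ∈ L ∧ L ⊆ upperLimit C ∧ (L ∩ S).Nonempty := by
  set T : ℕ → Set α := fun N => closure (⋃ n ≥ N, C n)
  have hshift : ∀ N n, C (n + N) ⊆ T N := fun N n =>
    (subset_iUnion₂ (s := fun n (_ : n ≥ N) => C n) (n + N) (Nat.le_add_left N n)).trans
      subset_closure
  have hTcpt : ∀ N, IsCompact (T N) := fun N =>
    hK.of_isClosed_subset isClosed_closure
      (closure_minimal (iUnion₂_subset fun n _ => hCK n) hK.isClosed)
  have hpN : ∀ N, Tendsto (fun n => p (n + N)) atTop (𝓝 x) := fun N =>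
    hpx.comp (tendsto_add_atTop_nat N)
  have hxT : ∀ N, x ∈ T N := fun N =>
    isClosed_closure.mem_of_tendsto (hpN N) (Eventually.of_forall fun n => hshift N n (hp _))
  set L' : ℕ → Set α := fun N => connectedComponentIn (T N) x
  have hL'cpt : ∀ N, IsCompact (L' N) := fun N =>
    (hTcpt N).of_isClosed_subset (isClosed_closure.connectedComponentIn x)
      (connectedComponentIn_subset _ _)
  have hanti : Antitone L' := antitone_nat_of_succ_le fun N => connectedComponentIn_mono x
    (closure_mono (iUnion₂_mono' fun n hn => ⟨n, by omega, subset_rfl⟩))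
  have hL'S : ∀ N, (L' N ∩ S).Nonempty := fun N =>
    (hTcpt N).connectedComponentIn_inter_nonempty_of_tendsto hS (hshift N) (fun n => hC _)
      (fun n => hCS _) (fun n => hp _) (hpN N)
  refine ⟨⋂ N, L' N, isPreconnected_iInter_of_directed hanti.directed_ge hL'cpt
    (fun N => isPreconnected_connectedComponentIn),
    mem_iInter.2 fun N => mem_connectedComponentIn (hxT N),
    iInter_mono fun N => connectedComponentIn_subset _ _, ?_⟩
  rw [iInter_inter]
  exact IsCompact.nonempty_iInter_of_sequence_nonempty_isCompact_isClosed _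
    (fun N => inter_subset_inter_left _ (hanti N.le_succ)) hL'S ((hL'cpt 0).inter_right hS)
    fun N => (hL'cpt N).isClosed.inter hS

theorem infinite_image_connectedComponentIn_of_tendsto {E : Set α} (hE : IsClosed E)
    {xs : ℕ → α} {x : α} (hxs : Tendsto xs atTop (𝓝 x))
    (hxsE : ∀ n, xs n ∈ E \ connectedComponentIn E x) {I : Set ℕ} (hI : I.Infinite) :
    ((fun n => connectedComponentIn E (xs n)) '' I).Infinite := by
  intro hfin
  have hcl : IsClosed (⋃ S ∈ (fun n => connectedComponentIn E (xs n)) '' I, S) :=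
    hfin.isClosed_biUnion <| by
      rintro _ ⟨n, -, rfl⟩
      exact hE.connectedComponentIn (xs n)
  have hfreq : ∃ᶠ n in atTop, xs n ∈ ⋃ S ∈ (fun n => connectedComponentIn E (xs n)) '' I, S :=
    (Nat.frequently_atTop_iff_infinite.2 hI).mono fun n hn =>
      mem_biUnion (mem_image_of_mem _ hn) (mem_connectedComponentIn (hxsE n).1)
  obtain ⟨_, ⟨n, -, rfl⟩, hxn⟩ := mem_iUnion₂.1 (hcl.mem_of_frequently_of_tendsto hfreq hxs)
  exact (hxsE n).2 (connectedComponentIn_eq hxn ▸ mem_connectedComponentIn (hxsE n).1)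

end UpperLimit

section LocallyConnected

variable {Y : Type*} [TopologicalSpace Y] [LocallyConnectedSpace Y] [T1Space Y]

theorem mem_closure_connectedComponentIn_diff_singleton {N : Set Y} {s t : Y} (hN : IsOpen N)
    (hNc : IsPreconnected N) (hs : s ∈ N) (ht : t ∈ N \ {s}) :
    s ∈ closure (connectedComponentIn (N \ {s}) t) := by
  set Q := connectedComponentIn (N \ {s}) t
  by_contra hsQ
  have hQ : closure Q ∩ N ⊆ Q := fun p hp =>
    (isPreconnected_connectedComponentIn.subset_closure (subset_insert p Q)
      (insert_subset hp.1 subset_closure)).subset_connectedComponentIn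
      (mem_insert_of_mem _ (mem_connectedComponentIn ht))
      (insert_subset (show p ∈ N \ {s} from ⟨hp.2, fun h => hsQ (h ▸ hp.1)⟩)
        (connectedComponentIn_subset _ _))
      (mem_insert p Q)
  have hNQ := hNc.subset_of_closure_inter_subset
    (hN.sdiff isClosed_singleton).connectedComponentIn ⟨t, ht.1, mem_connectedComponentIn ht⟩ hQ
  exact (connectedComponentIn_subset _ _ (hNQ hs)).2 rfl

theorem eventually_mem_connectedComponentIn_insert {s : Y} {A B U : Set Y} (hA : IsOpen A)
    (hB : IsOpen B) (hAB : Disjoint A B) (hcover : A ∪ B ∈ 𝓝[≠] s) (hU : U ∈ 𝓝 s) :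
    ∀ᶠ t in 𝓝 s, t ∈ A → t ∈ connectedComponentIn (insert s (A ∩ U)) s := by
  obtain ⟨W, hWo, hsW, hWAB⟩ := mem_nhdsWithin.1 hcover
  obtain ⟨N, ⟨hNo, hsN, hNc⟩, hNsub⟩ :=
    (LocallyConnectedSpace.open_connected_basis s).mem_iff.1 (inter_mem (hWo.mem_nhds hsW) hU)
  filter_upwards [hNo.mem_nhds hsN] with t htN htA
  rcases eq_or_ne t s with rfl | hts
  · exact mem_connectedComponentIn (mem_insert t _)
  have ht : t ∈ N \ {s} := ⟨htN, hts⟩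
  set Q := connectedComponentIn (N \ {s}) t
  have hQA : Q ⊆ A := isPreconnected_connectedComponentIn.subset_left_of_subset_union hA hB hAB
    ((connectedComponentIn_subset _ _).trans fun y (hy : y ∈ N \ {s}) =>
      hWAB ⟨(hNsub hy.1).1, hy.2⟩)
    ⟨t, mem_connectedComponentIn ht, htA⟩
  have hQ : IsPreconnected (insert s Q) :=
    isPreconnected_connectedComponentIn.subset_closure (subset_insert s Q)
      (insert_subset (mem_closure_connectedComponentIn_diff_singleton hNo hNc.isPreconnected hsN ht)
        subset_closure)
  exact hQ.subset_connectedComponentIn (mem_insert s Q)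
    (insert_subset_insert fun y hy =>
      show y ∈ A ∩ U from ⟨hQA hy, (hNsub (connectedComponentIn_subset _ _ hy).1).2⟩)
    (mem_insert_of_mem s (mem_connectedComponentIn ht))

end LocallyConnected

section Metric

theorem exists_pos_connectedComponentIn_closedBall_notMem_nhdsWithin {α : Type*}
    [PseudoMetricSpace α] {X : Set α} {x : α} (hx : x ∈ X)
    (h : ∃ U ∈ 𝓝 (⟨x, hx⟩ : X), ∀ V ∈ 𝓝 (⟨x, hx⟩ : X), V ⊆ U → ¬ IsConnected V) :
    ∃ R > 0, connectedComponentIn (X ∩ closedBall x R) x ∉ 𝓝[X] x := by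
  obtain ⟨U, hU, hnot⟩ := h
  obtain ⟨ε, hε, hεU⟩ := Metric.mem_nhds_iff.1 hU
  refine ⟨ε / 2, half_pos hε, fun hC => ?_⟩
  set C := connectedComponentIn (X ∩ closedBall x (ε / 2)) x
  have hCX : C ⊆ X := (connectedComponentIn_subset _ _).trans inter_subset_left
  have himage : Subtype.val '' (Subtype.val ⁻¹' C : Set X) = C := by
    rw [Subtype.image_preimage_coe, inter_eq_right.2 hCX]
  refine hnot (Subtype.val ⁻¹' C) ?_ (fun w hw => hεU ?_) ⟨⟨⟨x, hx⟩, ?_⟩, ?_⟩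
  · rw [mem_nhds_subtype_iff_nhdsWithin, himage]
    exact hC
  · have hw' : dist (w : α) x ≤ ε / 2 := (connectedComponentIn_subset _ _ hw).2
    exact mem_ball.2 (hw'.trans_lt (half_lt_self hε))
  · exact mem_connectedComponentIn ⟨hx, mem_closedBall_self (half_pos hε).le⟩
  · rw [← Topology.IsInducing.subtypeVal.isPreconnected_image, himage]
    exact isPreconnected_connectedComponentIn

theorem exists_seq_tendsto_mem_inter_notMem {α : Type*} [TopologicalSpace α]
    [FirstCountableTopology α] {X C W : Set α} {x : α} (hC : C ∉ 𝓝[X] x) (hW : W ∈ 𝓝 x) :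
    ∃ xs : ℕ → α, Tendsto xs atTop (𝓝 x) ∧ ∀ n, xs n ∈ X ∩ W ∧ xs n ∉ C := by
  have hfreq : ∃ᶠ y in 𝓝[X] x, y ∈ X ∩ W ∧ y ∉ C :=
    ((not_eventually.1 hC).and_eventually
      (inter_mem self_mem_nhdsWithin (mem_nhdsWithin_of_mem_nhds hW))).mono fun _ h => ⟨h.2, h.1⟩
  obtain ⟨xs, hxs, hxsmem⟩ := frequently_iff_seq_forall.1 hfreq
  exact ⟨xs, hxs.mono_right nhdsWithin_le_nhds, hxsmem⟩

theorem eventually_mem_connectedComponentIn_inter_closedBall {E : Type*}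
    [SeminormedAddCommGroup E] [NormedSpace ℝ E] {X : Set E} {x v : E} {r : ℝ}
    (hv : v ∈ interior X) (hvr : v ∈ closedBall x r) :
    ∀ᶠ w in 𝓝 v, w ∈ closedBall x r → w ∈ connectedComponentIn (X ∩ closedBall x r) v := by
  obtain ⟨η, hη, hball⟩ := Metric.mem_nhds_iff.1 (mem_interior_iff_mem_nhds.1 hv)
  filter_upwards [ball_mem_nhds v hη] with w hw hwr
  exact ((convex_ball v η).inter (convex_closedBall x r)).isPreconnected.subset_connectedComponentIn
    ⟨mem_ball_self hη, hvr⟩ (inter_subset_inter_left _ hball) ⟨hw, hwr⟩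

end Metric

section Cuts

theorem IsSimpleClosedCurve.isClosed {γ : Set (OnePoint ℂ)} (hγ : IsSimpleClosedCurve γ) :
    IsClosed γ := by
  obtain ⟨f, hf, -, rfl⟩ := hγ
  have := isCompact_iff_compactSpace.1 (isCompact_sphere (0 : ℂ) 1)
  exact (isCompact_range hf).isClosed

theorem IsGoodCut.finite_preimage_inter_frontier {X : Set ℂ} {γ : Set (OnePoint ℂ)}
    (hγ : IsGoodCut X γ) : ((↑) ⁻¹' γ ∩ frontier X : Set ℂ).Finite :=
  (hγ.2.2.1.preimage OnePoint.coe_injective.injOn).subset fun c hc => ⟨hc.1, c, hc.2, rfl⟩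

theorem IsSimpleClosedCurve.eventually_mem_connectedComponentIn {γ : Set (OnePoint ℂ)}
    (hγ : IsSimpleClosedCurve γ) {X : Set ℂ} (hfin : ((↑) ⁻¹' γ ∩ frontier X : Set ℂ).Finite)
    {x v : ℂ} {r : ℝ} (hvX : v ∈ X) (hvγ : (v : OnePoint ℂ) ∈ γ) (hvr : dist v x < r) :
    ∀ᶠ w in 𝓝 v, w ∈ interior X → (w : OnePoint ℂ) ∈ γ →
      w ∈ connectedComponentIn (X ∩ closedBall x r) v := by
  obtain ⟨f, hfc, hfinj, rfl⟩ := hγ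
  have : CompactSpace (sphere (0 : ℂ) 1) := isCompact_iff_compactSpace.1 (isCompact_sphere 0 1)
  have : LocallyConnectedSpace (sphere (0 : ℂ) 1) :=
    have := finrank_real_complex_fact'
    ChartedSpace.locallyConnectedSpace (EuclideanSpace ℝ (Fin 1)) _
  obtain ⟨s, hs⟩ := hvγ
  set A := f ⁻¹' ((↑) '' interior X)
  set B := f ⁻¹' ((↑) '' (closure X)ᶜ)
  set U := f ⁻¹' ((↑) '' ball v (r - dist v x))
  have hA : IsOpen A := (OnePoint.isOpen_image_coe.2 isOpen_interior).preimage hfc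
  have hB : IsOpen B := (OnePoint.isOpen_image_coe.2 isClosed_closure.isOpen_compl).preimage hfc
  have hAB : Disjoint A B := ((disjoint_image_iff OnePoint.coe_injective).2
    (disjoint_compl_right.mono_left interior_subset_closure)).preimage f
  have hU : U ∈ 𝓝 s := hfc.continuousAt.preimage_mem_nhds <|
    (OnePoint.isOpen_image_coe.2 isOpen_ball).mem_nhds
      (hs ▸ mem_image_of_mem _ (mem_ball_self (sub_pos.2 hvr)))
  have hcover : A ∪ B ∈ 𝓝[≠] s := by
    set Z := f ⁻¹' ((↑) '' ((↑) ⁻¹' range f ∩ frontier X) ∪ {∞}) \ {s}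
    have hZ : Z.Finite :=
      ((hfin.image _).union (finite_singleton ∞)).preimage hfinj.injOn |>.sdiff
    filter_upwards [mem_nhdsWithin_of_mem_nhds (hZ.isClosed.isOpen_compl.mem_nhds fun h => h.2 rfl),
      self_mem_nhdsWithin] with t htZ hts
    obtain ⟨c, hc⟩ := OnePoint.ne_infty_iff_exists.1 fun h => htZ ⟨Or.inr h, hts⟩
    have hcX : c ∉ frontier X := fun h => htZ ⟨Or.inl ⟨c, ⟨⟨t, hc.symm⟩, h⟩, hc⟩, hts⟩
    by_cases hci : c ∈ interior X
    · exact Or.inl ⟨c, hci, hc⟩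
    · exact Or.inr ⟨c, fun h => hcX ⟨h, hci⟩, hc⟩
  have hloc := eventually_mem_connectedComponentIn_insert hA hB hAB hcover hU
  rw [(hfc.isClosedEmbedding hfinj).isInducing.nhds_eq_comap, eventually_comap, hs] at hloc
  filter_upwards [(OnePoint.continuous_coe.tendsto v).eventually hloc] with w hw hwX ⟨t, ht⟩
  set P := connectedComponentIn (insert s (A ∩ U)) s
  have hPsub : ∀ c : ℂ, (c : OnePoint ℂ) ∈ f '' P →
      c = v ∨ c ∈ interior X ∩ ball v (r - dist v x) := by
    rintro c ⟨t', ht'P, ht'c⟩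
    rcases connectedComponentIn_subset _ _ ht'P with rfl | ⟨⟨c₁, hc₁, e₁⟩, ⟨c₂, hc₂, e₂⟩⟩
    · exact Or.inl (OnePoint.coe_injective (ht'c.symm.trans hs))
    · rw [OnePoint.coe_injective (e₁.trans ht'c)] at hc₁
      rw [OnePoint.coe_injective (e₂.trans ht'c)] at hc₂
      exact Or.inr ⟨hc₁, hc₂⟩
  have hPrange : f '' P ⊆ range ((↑) : ℂ → OnePoint ℂ) := by
    rintro _ ⟨t', ht'P, rfl⟩
    rcases connectedComponentIn_subset _ _ ht'P with rfl | ⟨⟨c, -, e⟩, -⟩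
    exacts [⟨v, hs.symm⟩, ⟨c, e⟩]
  have hP : IsPreconnected ((↑) ⁻¹' (f '' P) : Set ℂ) :=
    (isPreconnected_connectedComponentIn.image f hfc.continuousOn).preimage_of_isOpenMap
      OnePoint.coe_injective OnePoint.isOpenMap_coe hPrange
  refine hP.subset_connectedComponentIn ⟨s, mem_connectedComponentIn (mem_insert _ _), hs⟩
    (fun c hc => ?_) ⟨t, hw t ht ⟨w, hwX, ht.symm⟩, ht⟩
  rcases hPsub c hc with rfl | ⟨hcX, hcv⟩
  · exact ⟨hvX, mem_closedBall.2 hvr.le⟩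
  · refine ⟨interior_subset hcX, mem_closedBall.2 ?_⟩
    linarith [dist_triangle c v x, mem_ball.1 hcv]

theorem IsSimpleClosedCurve.exists_mem_frontier_dist_eq {γ : Set (OnePoint ℂ)}
    (hγ : IsSimpleClosedCurve γ) {X : Set ℂ} (hX : IsClosed X)
    (hfin : ((↑) ⁻¹' γ ∩ frontier X : Set ℂ).Finite) {x : ℂ} {r : ℝ}
    (hinf : (connectedComponentIn (X ∩ closedBall x r) ''
      (X ∩ closedBall x r ∩ (↑) ⁻¹' γ)).Infinite) :
    ∃ v ∈ frontier X, (v : OnePoint ℂ) ∈ γ ∧ dist v x = r := by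
  set E := X ∩ closedBall x r
  set Γ : Set ℂ := (↑) ⁻¹' γ
  have hK : IsCompact (E ∩ Γ) := ((isCompact_closedBall x r).inter_left hX).inter_right
    (hγ.isClosed.preimage OnePoint.continuous_coe)
  have hint : (connectedComponentIn E '' ((E ∩ Γ) \ frontier X)).Infinite := by
    have hsub : connectedComponentIn E '' (E ∩ Γ) ⊆ connectedComponentIn E '' ((E ∩ Γ) \ frontier X)
        ∪ connectedComponentIn E '' (Γ ∩ frontier X) := by
      rw [← image_union]
      exact image_mono fun w hw => (em (w ∈ frontier X)).elim (fun h => Or.inr ⟨hw.2, h⟩)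
        fun h => Or.inl ⟨hw, h⟩
    exact (infinite_union.1 (hinf.mono hsub)).resolve_right (hfin.image _).not_infinite
  obtain ⟨u, husub, hbij⟩ := exists_subset_bijOn ((E ∩ Γ) \ frontier X) (connectedComponentIn E)
  have huint : ∀ w ∈ u, w ∈ interior X := fun w hw =>
    self_sdiff_frontier X ▸ ⟨(husub hw).1.1.1, (husub hw).2⟩
  have huinf : u.Infinite := fun h => hint (hbij.image_eq ▸ h.image _)
  obtain ⟨v, ⟨hvE, hvγ⟩, hacc⟩ :=
    huinf.exists_accPt_of_subset_isCompact hK (husub.trans sdiff_subset)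
  by_contra! hne
  have hmerge : ∀ᶠ w in 𝓝 v, w ∈ u → w ∈ connectedComponentIn E v := by
    by_cases hvint : v ∈ interior X
    · filter_upwards [eventually_mem_connectedComponentIn_inter_closedBall hvint hvE.2]
        with w hw hwu using hw (husub hwu).1.1.2
    · filter_upwards [hγ.eventually_mem_connectedComponentIn hfin hvE.1 hvγ
        ((mem_closedBall.1 hvE.2).lt_of_ne (hne v ⟨subset_closure hvE.1, hvint⟩ hvγ))]
        with w hw hwu using hw (huint w hwu) (husub hwu).1.2
  refine Infinite.of_accPt (hacc.nhds_inter hmerge) (Finite.of_finite_image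
    ((finite_singleton (connectedComponentIn E v)).subset ?_) (hbij.injOn.mono inter_subset_right))
  rintro _ ⟨w, ⟨hwv, hwu⟩, rfl⟩
  exact (connectedComponentIn_eq (hwv hwu)).symm

theorem SeparatedBy.infinite_image_connectedComponentIn {γ : Set (OnePoint ℂ)} {x z : ℂ}
    (hsep : SeparatedBy γ x z) (hγ : IsClosed γ) {E : Set ℂ} (hE : IsClosed E) {xs : ℕ → ℂ}
    (hxs : Tendsto xs atTop (𝓝 x)) (hxsE : ∀ n, xs n ∈ E \ connectedComponentIn E x)
    (hz : z ∈ upperLimit fun n => connectedComponentIn E (xs n)) :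
    (connectedComponentIn E '' (E ∩ (↑) ⁻¹' γ)).Infinite := by
  obtain ⟨hxΓ, hzΓ, hne⟩ := hsep
  set Γ := {w : ℂ | (w : OnePoint ℂ) ∉ γ}
  have hΓ : IsOpen Γ := hγ.isOpen_compl.preimage OnePoint.continuous_coe
  have hΩ : ∀ {y}, y ∈ Γ → connectedComponentIn Γ y ∈ 𝓝 y := fun hy =>
    hΓ.connectedComponentIn.mem_nhds (mem_connectedComponentIn hy)
  have hfreq : ∃ᶠ n in atTop, xs n ∈ connectedComponentIn Γ x ∧
      (connectedComponentIn E (xs n) ∩ connectedComponentIn Γ z).Nonempty :=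
    (hxs.eventually (hΩ hxΓ)).and_frequently (mem_upperLimit_iff.1 hz _ (hΩ hzΓ))
  refine (infinite_image_connectedComponentIn_of_tendsto hE hxs hxsE
    (Nat.frequently_atTop_iff_infinite.1 hfreq)).mono ?_
  rintro _ ⟨n, ⟨hnx, q, hqE, hqz⟩, rfl⟩
  obtain ⟨w, hw, hwγ⟩ := not_subset.1 (not_subset_of_mem_connectedComponentIn
    isPreconnected_connectedComponentIn ⟨mem_connectedComponentIn (hxsE n).1, hnx⟩ ⟨hqE, hqz⟩ hne)
  exact ⟨w, ⟨connectedComponentIn_subset _ _ hw, not_not.1 hwγ⟩, (connectedComponentIn_eq hw).symm⟩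

theorem mem_pseudoFiber_of_mem_upperLimit {X : Set ℂ} (hX : IsClosed X) {x : ℂ} {r₀ R : ℝ}
    (hr : r₀ < R) {xs : ℕ → ℂ} (hxs : Tendsto xs atTop (𝓝 x))
    (hxsX : ∀ n, xs n ∈ X ∩ closedBall x r₀)
    (hxsC : ∀ n, xs n ∉ connectedComponentIn (X ∩ closedBall x R) x) {z : ℂ}
    (hz : z ∈ upperLimit fun n => connectedComponentIn (X ∩ closedBall x r₀) (xs n)) :
    z ∈ pseudoFiber X x := by
  have hzX : z ∈ X := closure_minimal (iUnion₂_subset fun n _ =>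
    (connectedComponentIn_subset _ _).trans inter_subset_left) hX (mem_iInter.1 hz 0)
  refine ⟨hzX, fun ⟨γ, hγ, hsep⟩ => ?_⟩
  have hfin := hγ.finite_preimage_inter_frontier
  have hcross : Icc r₀ R ⊆ (dist · x) '' ((↑) ⁻¹' γ ∩ frontier X) := by
    rintro r ⟨hr₀, hrR⟩
    have hball : ∀ {a b : ℝ}, a ≤ b → X ∩ closedBall x a ⊆ X ∩ closedBall x b := fun h =>
      inter_subset_inter_right _ (closedBall_subset_closedBall h)
    have hmono : ∀ n, connectedComponentIn (X ∩ closedBall x r₀) (xs n) ⊆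
        connectedComponentIn (X ∩ closedBall x r) (xs n) := fun n =>
      connectedComponentIn_mono _ (hball hr₀)
    have hxsE : ∀ n, xs n ∈ (X ∩ closedBall x r) \ connectedComponentIn (X ∩ closedBall x r) x :=
      fun n => ⟨hball hr₀ (hxsX n), fun h => hxsC n (connectedComponentIn_mono _ (hball hrR) h)⟩
    obtain ⟨v, hvfr, hvγ, hv⟩ := hγ.1.exists_mem_frontier_dist_eq hX hfin
      (hsep.infinite_image_connectedComponentIn hγ.1.isClosed (hX.inter isClosed_closedBall) hxs
        hxsE (upperLimit_mono hmono hz))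
    exact ⟨v, ⟨hvγ, hvfr⟩, hv⟩
  exact Icc_infinite hr ((hfin.image _).subset hcross)

end Cuts

theorem stmt_3_general (X : Set ℂ) (hcomp : IsCompact X) (hconn : IsConnected X)
    (x : ℂ) (hx : x ∈ X)
    (hnlc : ∃ U ∈ 𝓝 (⟨x, hx⟩ : X), ∀ V ∈ 𝓝 (⟨x, hx⟩ : X), V ⊆ U → ¬ IsConnected V) :
    fiber X x ≠ {x} := by
  obtain ⟨R, hR, hC⟩ := exists_pos_connectedComponentIn_closedBall_notMem_nhdsWithin hx hnlc
  have hR₂ : 0 < R / 2 := half_pos hR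
  obtain ⟨xs, hxs, hxsmem⟩ := exists_seq_tendsto_mem_inter_notMem hC (closedBall_mem_nhds x hR₂)
  have hXball : ¬ X ⊆ interior (closedBall x (R / 2)) := fun hsub => (hxsmem 0).2 <| by
    rw [inter_eq_left.2 (hsub.trans (interior_subset.trans
      (closedBall_subset_closedBall (half_le_self hR.le))))]
    exact hconn.isPreconnected.subset_connectedComponentIn hx subset_rfl (hxsmem 0).1.1
  obtain ⟨L, hL, hxL, hLsub, y, hyL, hy⟩ := exists_isPreconnected_subset_upperLimit
    (hcomp.inter_right isClosed_closedBall) isClosed_sphere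
    (fun n => connectedComponentIn_subset _ _) (fun n => isPreconnected_connectedComponentIn)
    (fun n => frontier_closedBall x hR₂.ne' ▸ connectedComponentIn_inter_frontier_nonempty
      hconn.isPreconnected hcomp isClosed_closedBall (hxsmem n).1 hXball)
    (fun n => mem_connectedComponentIn (hxsmem n).1) hxs
  have hLfib : L ⊆ fiber X x := hL.subset_connectedComponentIn hxL fun z hz =>
    mem_pseudoFiber_of_mem_upperLimit hcomp.isClosed (half_lt_self hR) hxs
      (fun n => (hxsmem n).1) (fun n => (hxsmem n).2) (hLsub hz)
  intro hfib
  have hyx : y = x := by simpa [hfib] using hLfib hyL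
  rw [hyx, mem_sphere, dist_self] at hy
  exact hR₂.ne hy

/-- if `X` is not locally connected at `x`, then the fiber `F_x`
is nontrivial. -/
theorem stmt_3 (X : Set ℂ) (hcomp : IsCompact X) (hconn : IsConnected X)
    (hfin : (comps (Xᶜ : Set ℂ)).Finite) (x : ℂ) (hx : x ∈ X)
    (hnlc : ∃ U ∈ 𝓝 (⟨x, hx⟩ : X), ∀ V ∈ 𝓝 (⟨x, hx⟩ : X), V ⊆ U → ¬ IsConnected V) :
    fiber X x ≠ {x} :=
  stmt_3_general X hcomp hconn x hx hnlc
end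
end

section
/- Let E ⊆ ℂ be a nonempty compact set such that ℂ \ E has finitely many connected components, and let F be a connected component of E. Then every connected component of ℂ \ F contains at least one connected component of ℂ \ E. In particular, the number of connected components of ℂ \ F is at most the number of connected components of ℂ \ E. -/
open Set Topology OnePoint

noncomputable section

/-- if `E ⊆ ℂ` is a nonempty compact set with finitely many
complementary components and `F` is a component of `E`, then every component of
`ℂ \ F` contains a component of `ℂ \ E`; in particular the number of components
of `ℂ \ F` is at most that of `ℂ \ E`. -/
theorem stmt_6 (E : Set ℂ) (hne : E.Nonempty) (hcomp : IsCompact E)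
    (hfin : (comps (Eᶜ : Set ℂ)).Finite) (F : Set ℂ) (hF : F ∈ comps E) :
    (∀ C ∈ comps (Fᶜ : Set ℂ), ∃ D ∈ comps (Eᶜ : Set ℂ), D ⊆ C) ∧
      (comps (Fᶜ : Set ℂ)).ncard ≤ (comps (Eᶜ : Set ℂ)).ncard := by
  obtain ⟨z0, hz0, hFeq⟩ := hF
  have hFsub : F ⊆ E := by rw [hFeq]; exact connectedComponentIn_subset E z0
  have hz0F : z0 ∈ F := by rw [hFeq]; exact mem_connectedComponentIn hz0
  have hFconn : IsPreconnected F := by rw [hFeq]; exact isPreconnected_connectedComponentIn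
  have hFclosed : IsClosed F := by
    refine isClosed_of_closure_subset ?_
    have h1 : IsPreconnected (closure F) := hFconn.closure
    have h2 : closure F ⊆ E := by
      calc closure F ⊆ closure E := closure_mono hFsub
        _ = E := hcomp.isClosed.closure_eq
    have := h1.subset_connectedComponentIn (subset_closure hz0F) h2
    rwa [← hFeq] at this
  have hFcopen : IsOpen (Fᶜ : Set ℂ) := hFclosed.isOpen_compl
  have key : ∀ C ∈ comps (Fᶜ : Set ℂ), ∃ D ∈ comps (Eᶜ : Set ℂ), D ⊆ C := by
    rintro C ⟨w, hw, rfl⟩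
    have hwC : w ∈ connectedComponentIn (Fᶜ : Set ℂ) w := mem_connectedComponentIn hw
    set C := connectedComponentIn (Fᶜ : Set ℂ) w with hC
    have hCconn : IsPreconnected C := isPreconnected_connectedComponentIn
    have hCF : C ⊆ (Fᶜ : Set ℂ) := connectedComponentIn_subset _ _
    have hCopen : IsOpen C := hFcopen.connectedComponentIn
    -- C meets the complement of E
    have hzmem : ∃ z ∈ C, z ∉ E := by
      by_contra hcon
      push_neg at hcon
      have hCE : C ⊆ E := hcon
      rcases eq_empty_or_nonempty (closure C \ C) with hbd | ⟨x, hxcl, hxC⟩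
      · have hCclosed : IsClosed C := by
          refine isClosed_of_closure_subset fun y hy => ?_
          by_contra hyC
          exact absurd (mem_diff y |>.mpr ⟨hy, hyC⟩) (by rw [hbd]; exact notMem_empty y)
        have : C = univ := (IsClopen.eq_univ ⟨hCclosed, hCopen⟩ ⟨w, hwC⟩)
        have : E = univ := eq_univ_of_univ_subset (this ▸ hCE)
        exact hcomp.ne_univ this
      · -- x is on the boundary of C; x must lie in F
        have hxF : x ∈ F := by
          by_contra hxF
          have hsub : C ∪ {x} ⊆ (Fᶜ : Set ℂ) := union_subset hCF (by simpa using hxF)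
          have hconn : IsPreconnected (C ∪ {x}) :=
            hCconn.subset_closure subset_union_left
              (union_subset subset_closure (by simpa using hxcl))
          have : C ∪ {x} ⊆ C :=
            hconn.subset_connectedComponentIn (Or.inl hwC) hsub
          exact hxC (this (Or.inr rfl))
        have hclE : closure C ⊆ E := by
          calc closure C ⊆ closure E := closure_mono hCE
            _ = E := hcomp.isClosed.closure_eq
        have hun : IsPreconnected (closure C ∪ F) :=
          IsPreconnected.union x hxcl hxF hCconn.closure hFconn
        have hsubE : closure C ∪ F ⊆ E := union_subset hclE hFsub
        have : closure C ∪ F ⊆ F := by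
          have h3 := hun.subset_connectedComponentIn (Or.inr hz0F) hsubE
          rwa [← hFeq] at h3
        exact hw (this (Or.inl (subset_closure hwC)))
    obtain ⟨z, hzC, hzE⟩ := hzmem
    refine ⟨connectedComponentIn (Eᶜ : Set ℂ) z, ⟨z, hzE, rfl⟩, ?_⟩
    have h1 : connectedComponentIn (Eᶜ : Set ℂ) z ⊆ (Fᶜ : Set ℂ) :=
      (connectedComponentIn_subset _ _).trans (compl_subset_compl.mpr hFsub)
    have h2 : connectedComponentIn (Eᶜ : Set ℂ) z ⊆ connectedComponentIn (Fᶜ : Set ℂ) z :=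
      isPreconnected_connectedComponentIn.subset_connectedComponentIn
        (mem_connectedComponentIn hzE) h1
    rw [hC, connectedComponentIn_eq (hC ▸ hzC : z ∈ connectedComponentIn (Fᶜ : Set ℂ) w)]
    exact h2
  refine ⟨key, ?_⟩
  classical
  refine Set.ncard_le_ncard_of_injOn
    (fun C => if h : C ∈ comps (Fᶜ : Set ℂ) then Classical.choose (key C h) else ∅) ?_ ?_ hfin
  · intro C hC
    simp only [dif_pos hC]
    exact (Classical.choose_spec (key C hC)).1
  · intro C1 h1 C2 h2 heq
    simp only [dif_pos h1, dif_pos h2] at heq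
    obtain ⟨hD1mem, hD1sub⟩ := Classical.choose_spec (key C1 h1)
    obtain ⟨hD2mem, hD2sub⟩ := Classical.choose_spec (key C2 h2)
    obtain ⟨d, hdE, hDeq⟩ := hD1mem
    have hdD : d ∈ Classical.choose (key C1 h1) := hDeq ▸ mem_connectedComponentIn hdE
    have hd1 : d ∈ C1 := hD1sub hdD
    have hd2 : d ∈ C2 := hD2sub (heq ▸ hdD)
    obtain ⟨w1, hw1, rfl⟩ := h1
    obtain ⟨w2, hw2, rfl⟩ := h2
    have e1 := connectedComponentIn_eq hd1
    have e2 := connectedComponentIn_eq hd2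
    exact e1.trans e2.symm
end
end

section
/- Let X ⊆ ℂ be a continuum such that ℂ \ X has finitely many connected components, let h : ℂ̂ → ℂ̂ be a homeomorphism of the extended plane with h(∞) = ∞, and set Y = h(X) (viewed as a subset of ℂ). Then the pseudo-fibers and fibers of Y are the images under h of those of X: for every x ∈ X, the pseudo-fiber of Y at h(x) equals h(E_x) and the fiber of Y at h(x) equals h(F_x). -/
/-!
The definitions of good cuts, separation, pseudo-fibers and fibers only involve simple closed
curves in `ℂ̂`, frontiers, images and connected components, all of which are transported by
homeomorphisms. Since `h` fixes `∞`, it restricts to a homeomorphism `g` of `ℂ`, and `γ ↦ h(γ)`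
is a bijection from the good cuts of `X` onto those of `g(X)` that respects separation. Hence
`E_{g(x)}(g(X)) = g(E_x(X))`, and taking connected components gives the same for fibers.
-/

open Set Topology OnePoint

noncomputable section

namespace OnePoint

variable {X : Type*} [TopologicalSpace X]

lemma mem_range_coe_iff_apply_mem_range_coe {h : OnePoint X ≃ₜ OnePoint X} (hinf : h ∞ = ∞)
    (y : OnePoint X) : y ∈ range ((↑) : X → OnePoint X) ↔ h y ∈ range ((↑) : X → OnePoint X) := by
  rw [← not_iff_not, notMem_range_coe_iff, notMem_range_coe_iff, h.injective.eq_iff' hinf]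

def restrictHomeomorph (h : OnePoint X ≃ₜ OnePoint X) (hinf : h ∞ = ∞) : X ≃ₜ X :=
  let e := (isOpenEmbedding_coe (X := X)).isEmbedding.toHomeomorph
  e.trans ((h.subtype (mem_range_coe_iff_apply_mem_range_coe hinf)).trans e.symm)

lemma coe_restrictHomeomorph_apply (h : OnePoint X ≃ₜ OnePoint X) (hinf : h ∞ = ∞) (z : X) :
    (restrictHomeomorph h hinf z : OnePoint X) = h z := by
  obtain ⟨w, hw⟩ : h z ∈ range ((↑) : X → OnePoint X) :=
    (mem_range_coe_iff_apply_mem_range_coe hinf _).1 (mem_range_self z)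
  simp only [restrictHomeomorph, Homeomorph.trans_apply]
  rw [← hw, coe_eq_coe, Homeomorph.symm_apply_eq]
  ext
  simp [hw]

end OnePoint

lemma Homeomorph.image_connectedComponentIn' {α β : Type*} [TopologicalSpace α]
    [TopologicalSpace β] (e : α ≃ₜ β) (s : Set α) (x : α) :
    e '' connectedComponentIn s x = connectedComponentIn (e '' s) (e x) := by
  by_cases hx : x ∈ s
  · exact e.image_connectedComponentIn hx
  · rw [connectedComponentIn_eq_empty hx, connectedComponentIn_eq_empty
      (e.injective.mem_set_image.not.mpr hx), image_empty]

lemma emb_injective : Function.Injective emb :=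
  image_injective.mpr coe_injective

lemma IsSimpleClosedCurve.image {γ : Set (OnePoint ℂ)} (hγ : IsSimpleClosedCurve γ)
    (h : OnePoint ℂ ≃ₜ OnePoint ℂ) : IsSimpleClosedCurve (h '' γ) := by
  obtain ⟨f, hf, hf_inj, rfl⟩ := hγ
  exact ⟨h ∘ f, h.continuous.comp hf, h.injective.comp hf_inj, (range_comp h f).symm⟩

lemma isSimpleClosedCurve_image_iff {γ : Set (OnePoint ℂ)} (h : OnePoint ℂ ≃ₜ OnePoint ℂ) :
    IsSimpleClosedCurve (h '' γ) ↔ IsSimpleClosedCurve γ := by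
  refine ⟨fun hγ => ?_, fun hγ => hγ.image h⟩
  simpa only [image_image, h.symm_apply_apply, image_id'] using hγ.image h.symm

section Extension

variable {h : OnePoint ℂ ≃ₜ OnePoint ℂ} {g : ℂ ≃ₜ ℂ}

lemma emb_image (hg : ∀ z : ℂ, h z = g z) (S : Set ℂ) : emb (g '' S) = h '' emb S := by
  simp only [emb, image_image, hg]

lemma symm_apply_coe_of_forall_apply_coe (hg : ∀ z : ℂ, h z = g z) (z : ℂ) :
    h.symm z = g.symm z := by
  rw [h.symm_apply_eq, hg, g.apply_symm_apply]

lemma setOf_coe_notMem_image (hg : ∀ z : ℂ, h z = g z) (γ : Set (OnePoint ℂ)) :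
    {z : ℂ | (z : OnePoint ℂ) ∉ h '' γ} = g '' {z : ℂ | (z : OnePoint ℂ) ∉ γ} := by
  ext z
  simp only [h.image_eq_preimage_symm, g.image_eq_preimage_symm, mem_preimage, mem_ofPred_eq,
    symm_apply_coe_of_forall_apply_coe hg]

lemma isGoodCut_image_iff (hg : ∀ z : ℂ, h z = g z) {X : Set ℂ} {γ : Set (OnePoint ℂ)} :
    IsGoodCut (g '' X) (h '' γ) ↔ IsGoodCut X γ := by
  have h_front : h '' γ ∩ emb (frontier (g '' X)) = h '' (γ ∩ emb (frontier X)) := by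
    rw [← g.image_frontier, emb_image hg, image_inter h.injective]
  have h_diff : h '' γ \ emb (g '' X) = h '' (γ \ emb X) := by
    rw [emb_image hg, image_sdiff h.injective]
  rw [IsGoodCut, IsGoodCut, isSimpleClosedCurve_image_iff, h_front, h_diff, image_nonempty,
    image_nonempty, finite_image_iff h.injective.injOn]

lemma separatedBy_image_iff (hg : ∀ z : ℂ, h z = g z) {γ : Set (OnePoint ℂ)} {x y : ℂ} :
    SeparatedBy (h '' γ) (g x) (g y) ↔ SeparatedBy γ x y := by
  rw [SeparatedBy, SeparatedBy, setOf_coe_notMem_image hg, g.injective.mem_set_image,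
    g.injective.mem_set_image]
  refine and_congr_right fun hx => and_congr_right fun hy => not_congr ?_
  rw [← g.image_connectedComponentIn hx, ← g.image_connectedComponentIn hy,
    (image_injective.mpr g.injective).eq_iff]

lemma preimage_pseudoFiber_image (hg : ∀ z : ℂ, h z = g z) (X : Set ℂ) (x : ℂ) :
    g ⁻¹' pseudoFiber (g '' X) (g x) = pseudoFiber X x := by
  ext y
  simp only [pseudoFiber, mem_preimage, mem_ofPred_eq, g.injective.mem_set_image]
  rw [(image_surjective.mpr h.surjective).exists]
  simp only [isGoodCut_image_iff hg, separatedBy_image_iff hg]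

lemma pseudoFiber_image (hg : ∀ z : ℂ, h z = g z) (X : Set ℂ) (x : ℂ) :
    pseudoFiber (g '' X) (g x) = g '' pseudoFiber X x := by
  rw [← g.image_preimage (pseudoFiber _ _), preimage_pseudoFiber_image hg]

lemma fiber_image (hg : ∀ z : ℂ, h z = g z) (X : Set ℂ) (x : ℂ) :
    fiber (g '' X) (g x) = g '' fiber X x := by
  rw [fiber, fiber, pseudoFiber_image hg, g.image_connectedComponentIn']

end Extension

theorem stmt_10_general (X : Set ℂ)
    (h : OnePoint ℂ ≃ₜ OnePoint ℂ) (hinf : h ∞ = ∞)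
    (Y : Set ℂ) (hY : emb Y = h '' emb X)
    (x : ℂ)
    (x' : ℂ) (hx' : h (x : OnePoint ℂ) = (x' : OnePoint ℂ)) :
    emb (pseudoFiber Y x') = h '' emb (pseudoFiber X x) ∧
      emb (fiber Y x') = h '' emb (fiber X x) := by
  set g := restrictHomeomorph h hinf
  have hg : ∀ z : ℂ, h z = g z := fun z => (coe_restrictHomeomorph_apply h hinf z).symm
  obtain rfl : Y = g '' X := emb_injective (by rw [hY, emb_image hg])
  obtain rfl : x' = g x := coe_injective (by rw [← hx', hg])
  exact ⟨by rw [pseudoFiber_image hg, emb_image hg], by rw [fiber_image hg, emb_image hg]⟩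

/-- the pseudo-fibers and fibers of `Y = h(X)` are the images
under `h` of those of `X`, for a homeomorphism `h` of the extended plane fixing
`∞`. -/
theorem stmt_10 (X : Set ℂ) (hcomp : IsCompact X) (hconn : IsConnected X)
    (hfin : (comps (Xᶜ : Set ℂ)).Finite)
    (h : OnePoint ℂ ≃ₜ OnePoint ℂ) (hinf : h ∞ = ∞)
    (Y : Set ℂ) (hY : emb Y = h '' emb X)
    (x : ℂ) (hx : x ∈ X)
    (x' : ℂ) (hx' : h (x : OnePoint ℂ) = (x' : OnePoint ℂ)) :
    emb (pseudoFiber Y x') = h '' emb (pseudoFiber X x) ∧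
      emb (fiber Y x') = h '' emb (fiber X x) :=
  stmt_10_general X h hinf Y hY x x' hx'
end
end

section
/- Let X ⊆ ℂ be a continuum such that ℂ \ X has finitely many connected components, and let M ⊆ ∂X be an indecomposable continuum contained in the boundary of X. Then for every x ∈ M one has M ⊆ F_x; in particular, the fiber F_x is nontrivial for every x ∈ M. -/
open Set Topology OnePoint

noncomputable section

/-- A nondegenerate space `X` is indecomposable if it cannot be written as the
union of two proper closed connected subsets. -/
def IsIndecomposable {α : Type*} [TopologicalSpace α] (X : Set α) : Prop :=
  X.Nontrivial ∧ ∀ A B : Set α, A ⊆ X → B ⊆ X → IsClosed A → IsClosed B →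
    IsConnected A → IsConnected B → A ∪ B = X → A = X ∨ B = X

/-- Boundary bumping: in a compact preconnected set `M`, every connected component of a
proper closed subset `P` meets the closure of `M \ P`. -/
lemma aux_bb {M P : Set ℂ} (hMc : IsCompact M) (hMpc : IsPreconnected M)
    (hPM : P ⊆ M) (hPcl : IsClosed P) (hPne : P ≠ M) {z : ℂ} (hz : z ∈ P) :
    (connectedComponentIn P z ∩ closure (M \ P)).Nonempty := by
  by_contra hcon
  rw [Set.not_nonempty_iff_eq_empty] at hcon
  haveI : CompactSpace P := isCompact_iff_compactSpace.mp (hMc.of_isClosed_subset hPcl hPM)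
  set zz : P := ⟨z, hz⟩ with hzz
  have hcc : connectedComponent zz = ⋂ s : {s : Set P // IsClopen s ∧ zz ∈ s}, (s : Set P) :=
    connectedComponent_eq_iInter_isClopen zz
  have himg : connectedComponentIn P z = Subtype.val '' connectedComponent zz :=
    connectedComponentIn_eq_image hz
  set B : Set P := Subtype.val ⁻¹' (closure (M \ P)) with hB
  have hBcompact : IsCompact B :=
    (isClosed_closure.preimage continuous_subtype_val).isCompact
  have hBcc : B ∩ ⋂ s : {s : Set P // IsClopen s ∧ zz ∈ s}, (s : Set P) = ∅ := by
    rw [← hcc]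
    ext t
    simp only [mem_inter_iff, mem_empty_iff_false, iff_false, not_and]
    intro htB htcc
    have : (t : ℂ) ∈ connectedComponentIn P z ∩ closure (M \ P) :=
      ⟨himg ▸ ⟨t, htcc, rfl⟩, htB⟩
    rw [hcon] at this
    exact this
  obtain ⟨fs, hfs⟩ := hBcompact.elim_finite_subfamily_closed _ (fun i => i.2.1.1) hBcc
  set K' : Set P := ⋂ i ∈ fs, (i : Set P) with hK'
  have hK'clopen : IsClopen K' := isClopen_biInter_finset (fun i _ => i.2.1)
  have hzzK' : zz ∈ K' := mem_iInter₂.mpr fun i _ => i.2.2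
  obtain ⟨O, hO, hOK'⟩ : ∃ O : Set ℂ, IsOpen O ∧ Subtype.val ⁻¹' O = K' :=
    isOpen_induced_iff.mp hK'clopen.2
  set K : Set ℂ := Subtype.val '' K' with hKdef
  have hKco : IsCompact K := (hK'clopen.1.isCompact).image continuous_subtype_val
  have hKP : K ⊆ P := by rintro _ ⟨t, _, rfl⟩; exact t.2
  have hzK : z ∈ K := ⟨zz, hzzK', rfl⟩
  have hKclne : K ∩ closure (M \ P) = ∅ := by
    ext k
    simp only [mem_inter_iff, mem_empty_iff_false, iff_false, not_and]
    rintro ⟨t, htK', rfl⟩ htcl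
    have : t ∈ B ∩ ⋂ i ∈ fs, (i : Set P) := ⟨htcl, htK'⟩
    rw [hfs] at this
    exact this
  have hKeq : K = M ∩ (O ∩ (closure (M \ P))ᶜ) := by
    apply Subset.antisymm
    · rintro _ ⟨t, htK', rfl⟩
      refine ⟨hPM t.2, ?_, ?_⟩
      · rw [← hOK'] at htK'; exact htK'
      · intro hcl
        have : (t : ℂ) ∈ K ∩ closure (M \ P) := ⟨⟨t, htK', rfl⟩, hcl⟩
        rw [hKclne] at this; exact this
    · rintro w ⟨hwM, hwO, hwcl⟩
      have hwP : w ∈ P := by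
        by_contra hwP
        exact hwcl (subset_closure ⟨hwM, hwP⟩)
      have : (⟨w, hwP⟩ : P) ∈ K' := by rw [← hOK']; exact hwO
      exact ⟨⟨w, hwP⟩, this, rfl⟩
  obtain ⟨w, hwM, hwP⟩ : ∃ w, w ∈ M ∧ w ∉ P := by
    by_contra h
    push_neg at h
    exact hPne (Subset.antisymm hPM h)
  have h1 : (M ∩ (O ∩ (closure (M \ P))ᶜ)).Nonempty := ⟨z, hKeq ▸ hzK⟩
  have h2 : (M ∩ Kᶜ).Nonempty := ⟨w, hwM, fun hK => hwP (hKP hK)⟩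
  have hcover : M ⊆ (O ∩ (closure (M \ P))ᶜ) ∪ Kᶜ := by
    intro m hm
    by_cases hmK : m ∈ K
    · left; exact (hKeq ▸ hmK).2
    · right; exact hmK
  have := hMpc (O ∩ (closure (M \ P))ᶜ) Kᶜ
    (hO.inter isClosed_closure.isOpen_compl) hKco.isClosed.isOpen_compl hcover h1 h2
  obtain ⟨m, hmM, hmu, hmv⟩ := this
  exact hmv (hKeq ▸ ⟨hmM, hmu⟩)

/-- If `M = N ∪ P' ∪ Q'` with everything closed, `N` preconnected nonempty,
`P' ∩ Q' = ∅`, and `M` preconnected closed, then `N ∪ P'` is preconnected. -/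
lemma aux_union_pc {M N P' Q' : Set ℂ} (hMcl : IsClosed M) (hMpc : IsPreconnected M)
    (hNcl : IsClosed N) (hNpc : IsPreconnected N) (hNne : N.Nonempty)
    (hP'cl : IsClosed P') (hQ'cl : IsClosed Q') (hPQ : P' ∩ Q' = ∅)
    (hMeq : N ∪ P' ∪ Q' = M) : IsPreconnected (N ∪ P') := by
  have hNM : N ⊆ M := hMeq ▸ (subset_union_left.trans subset_union_left)
  rw [isPreconnected_iff_subset_of_fully_disjoint_closed (hNcl.union hP'cl)]
  intro u v hu hv hAuv huv
  have key : ∀ u v : Set ℂ, IsClosed u → IsClosed v → N ∪ P' ⊆ u ∪ v → Disjoint u v →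
      N ⊆ u → N ∪ P' ⊆ u := by
    intro u v hu hv hAuv huv hNu
    set S₁ : Set ℂ := (N ∪ P') ∩ v with hS₁
    set S₂ : Set ℂ := ((N ∪ P') ∩ u) ∪ (N ∪ Q') with hS₂
    have hS₁cl : IsClosed S₁ := (hNcl.union hP'cl).inter hv
    have hS₂cl : IsClosed S₂ := ((hNcl.union hP'cl).inter hu).union (hNcl.union hQ'cl)
    have hMcover : M ⊆ S₁ ∪ S₂ := by
      intro m hm
      rw [← hMeq] at hm
      rcases hm with hm | hm
      · rcases hAuv hm with h | h
        · right; left; exact ⟨hm, h⟩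
        · left; exact ⟨hm, h⟩
      · right; right; right; exact hm
    have hS₁S₂ : Disjoint S₁ S₂ := by
      rw [Set.disjoint_left]
      rintro t ⟨htNP, htv⟩ ht₂
      rcases ht₂ with ⟨_, htu⟩ | htNQ
      · exact (huv.le_bot ⟨htu, htv⟩ : t ∈ (⊥ : Set ℂ)).elim
      · rcases htNQ with htN | htQ
        · exact (huv.le_bot ⟨hNu htN, htv⟩ : t ∈ (⊥ : Set ℂ)).elim
        · rcases htNP with htN | htP
          · exact (huv.le_bot ⟨hNu htN, htv⟩ : t ∈ (⊥ : Set ℂ)).elim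
          · have : t ∈ P' ∩ Q' := ⟨htP, htQ⟩
            rw [hPQ] at this; exact this
    rcases (isPreconnected_iff_subset_of_fully_disjoint_closed hMcl).mp hMpc S₁ S₂
        hS₁cl hS₂cl hMcover hS₁S₂ with hMS | hMS
    · obtain ⟨n, hn⟩ := hNne
      have hnS₁ : n ∈ S₁ := hMS (hNM hn)
      exact absurd (huv.le_bot ⟨hNu hn, hnS₁.2⟩) (by simp)
    · intro t ht
      have htM : t ∈ M := hMeq ▸ (by rcases ht with h | h
                                     · exact Or.inl (Or.inl h)
                                     · exact Or.inl (Or.inr h))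
      rcases hMS htM with ⟨_, htu⟩ | htNQ
      · exact htu
      · rcases htNQ with htN | htQ
        · exact hNu htN
        · rcases ht with htN | htP
          · exact hNu htN
          · have : t ∈ P' ∩ Q' := ⟨htP, htQ⟩
            rw [hPQ] at this; exact this.elim
  rcases (isPreconnected_iff_subset_of_fully_disjoint_closed hNcl).mp hNpc u v hu hv
      ((subset_union_left.trans hAuv)) huv with h | h
  · exact Or.inl (key u v hu hv hAuv huv h)
  · exact Or.inr (key v u hv hu (by rw [union_comm v u]; exact hAuv) huv.symm h)

/-- A proper subcontinuum of an indecomposable continuum has empty interior. -/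
lemma aux_empty_interior {M : Set ℂ} (hMcl : IsClosed M) (hMpc : IsPreconnected M)
    (hMind : IsIndecomposable M) {N : Set ℂ} (hNM : N ⊆ M) (hNcl : IsClosed N)
    (hNpc : IsPreconnected N) (hNne : N.Nonempty) (hNneq : N ≠ M)
    {u : Set ℂ} (hu : IsOpen u) (hne : (M ∩ u).Nonempty) (hsub : M ∩ u ⊆ N) : False := by
  obtain ⟨z, hzM, hzu⟩ := hne
  set R : Set ℂ := closure (M \ N) with hR
  have hRM : R ⊆ M := closure_minimal diff_subset hMcl
  have hzR : z ∉ R := by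
    rw [hR, mem_closure_iff]
    push_neg
    refine ⟨u, hu, hzu, ?_⟩
    rw [Set.eq_empty_iff_forall_notMem]
    rintro w ⟨hwu, hwM, hwN⟩
    exact hwN (hsub ⟨hwM, hwu⟩)
  have hRneq : R ≠ M := fun h => hzR (h ▸ hzM)
  have hNR : N ∪ R = M := by
    apply Subset.antisymm (union_subset hNM hRM)
    intro m hm
    by_cases hmN : m ∈ N
    · exact Or.inl hmN
    · exact Or.inr (subset_closure ⟨hm, hmN⟩)
  have hRne : R.Nonempty := by
    obtain ⟨w, hwM, hwN⟩ : ∃ w, w ∈ M ∧ w ∉ N := by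
      by_contra h; push_neg at h; exact hNneq (Subset.antisymm hNM h)
    exact ⟨w, subset_closure ⟨hwM, hwN⟩⟩
  by_cases hRpc : IsPreconnected R
  · rcases hMind.2 N R hNM hRM hNcl isClosed_closure ⟨hNne, hNpc⟩ ⟨hRne, hRpc⟩ hNR with h | h
    · exact hNneq h
    · exact hRneq h
  · unfold IsPreconnected at hRpc
    push_neg at hRpc
    obtain ⟨p, q, hp, hq, hRpq, h1, h2, h3⟩ := hRpc
    set P' : Set ℂ := R \ q with hP'
    set Q' : Set ℂ := R \ p with hQ'
    have hP'cl : IsClosed P' := isClosed_closure.sdiff hq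
    have hQ'cl : IsClosed Q' := isClosed_closure.sdiff hp
    have hPQ : P' ∩ Q' = ∅ := by
      rw [Set.eq_empty_iff_forall_notMem]
      rintro t ⟨⟨htR, htq⟩, _, htp⟩
      rcases hRpq htR with h | h
      · exact htp h
      · exact htq h
    have hRPQ : R = P' ∪ Q' := by
      apply Subset.antisymm
      · intro t htR
        rcases hRpq htR with h | h
        · refine Or.inl ⟨htR, fun hq' => ?_⟩
          have : t ∈ R ∩ (p ∩ q) := ⟨htR, h, hq'⟩
          rw [h3] at this; exact this
        · refine Or.inr ⟨htR, fun hp' => ?_⟩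
          have : t ∈ R ∩ (p ∩ q) := ⟨htR, hp', h⟩
          rw [h3] at this; exact this
      · exact union_subset diff_subset diff_subset
    have hP'ne : P'.Nonempty := by
      obtain ⟨t, htR, htp⟩ := h1
      refine ⟨t, htR, fun hq' => ?_⟩
      have : t ∈ R ∩ (p ∩ q) := ⟨htR, htp, hq'⟩
      rw [h3] at this; exact this
    have hQ'ne : Q'.Nonempty := by
      obtain ⟨t, htR, htq⟩ := h2
      refine ⟨t, htR, fun hp' => ?_⟩
      have : t ∈ R ∩ (p ∩ q) := ⟨htR, hp', htq⟩
      rw [h3] at this; exact this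
    have hMeq : N ∪ P' ∪ Q' = M := by rw [union_assoc, ← hRPQ, hNR]
    have hMeq' : N ∪ Q' ∪ P' = M := by rw [union_assoc, union_comm Q' P', ← hRPQ, hNR]
    -- both P' and Q' meet M \ N
    have hmeet : ∀ S T : Set ℂ, R = S ∪ T → IsClosed S → T.Nonempty → S ∩ T = ∅ →
        (T ∩ (M \ N)).Nonempty := by
      intro S T hST hScl hTne hSTe
      by_contra hcon
      rw [Set.not_nonempty_iff_eq_empty] at hcon
      have hMNS : M \ N ⊆ S := by
        intro t ht
        have htR : t ∈ R := subset_closure ht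
        rcases hST ▸ htR with h | h
        · exact h
        · have : t ∈ T ∩ (M \ N) := ⟨h, ht⟩
          rw [hcon] at this; exact this.elim
      have hRS : R ⊆ S := closure_minimal hMNS hScl
      obtain ⟨t, htT⟩ := hTne
      have : t ∈ S ∩ T := ⟨hRS (hST ▸ Or.inr htT), htT⟩
      rw [hSTe] at this; exact this
    obtain ⟨q₀, hq₀Q, hq₀MN⟩ := hmeet P' Q' hRPQ hP'cl hQ'ne hPQ
    obtain ⟨p₀, hp₀P, hp₀MN⟩ := hmeet Q' P' (by rw [hRPQ, union_comm]) hQ'cl hP'ne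
      (by rw [inter_comm]; exact hPQ)
    have hA : IsPreconnected (N ∪ P') :=
      aux_union_pc hMcl hMpc hNcl hNpc hNne hP'cl hQ'cl hPQ hMeq
    have hB : IsPreconnected (N ∪ Q') :=
      aux_union_pc hMcl hMpc hNcl hNpc hNne hQ'cl hP'cl (by rw [inter_comm]; exact hPQ) hMeq'
    have hAM : N ∪ P' ⊆ M := hMeq ▸ subset_union_left
    have hBM : N ∪ Q' ⊆ M := hMeq' ▸ subset_union_left
    have hABM : (N ∪ P') ∪ (N ∪ Q') = M := by
      rw [← hMeq]; ext t
      constructor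
      · rintro ((h | h) | (h | h))
        · exact Or.inl (Or.inl h)
        · exact Or.inl (Or.inr h)
        · exact Or.inl (Or.inl h)
        · exact Or.inr h
      · rintro ((h | h) | h)
        · exact Or.inl (Or.inl h)
        · exact Or.inl (Or.inr h)
        · exact Or.inr (Or.inr h)
    rcases hMind.2 (N ∪ P') (N ∪ Q') hAM hBM (hNcl.union hP'cl) (hNcl.union hQ'cl)
        ⟨hNne.mono subset_union_left, hA⟩ ⟨hNne.mono subset_union_left, hB⟩ hABM with h | h
    · -- q₀ ∈ M = N ∪ P', but q₀ ∉ N and q₀ ∉ P'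
      have : q₀ ∈ N ∪ P' := h ▸ hq₀MN.1
      rcases this with h' | h'
      · exact hq₀MN.2 h'
      · have : q₀ ∈ P' ∩ Q' := ⟨h', hq₀Q⟩
        rw [hPQ] at this; exact this
    · have : p₀ ∈ N ∪ Q' := h ▸ hp₀MN.1
      rcases this with h' | h'
      · exact hp₀MN.2 h'
      · have : p₀ ∈ P' ∩ Q' := ⟨hp₀P, h'⟩
        rw [hPQ] at this; exact this

/-- If a nonempty relatively open subset of `M` is covered by finitely many closed sets,
one of them contains a nonempty relatively open subset of `M`. -/
lemma aux_fin {M : Set ℂ} (s : Finset ℂ) (C : ℂ → Set ℂ) (hC : ∀ p, IsClosed (C p)) :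
    ∀ u : Set ℂ, IsOpen u → (M ∩ u).Nonempty → M ∩ u ⊆ ⋃ p ∈ s, C p →
    ∃ p ∈ s, ∃ v : Set ℂ, IsOpen v ∧ (M ∩ v).Nonempty ∧ M ∩ v ⊆ C p := by
  induction s using Finset.induction_on with
  | empty =>
    intro u _ hne hsub
    obtain ⟨t, ht⟩ := hne
    simpa using hsub ht
  | @insert a s ha ih =>
    intro u hu hne hsub
    by_cases hcase : (M ∩ (u ∩ (C a)ᶜ)).Nonempty
    · have hsub' : M ∩ (u ∩ (C a)ᶜ) ⊆ ⋃ p ∈ s, C p := by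
        rintro t ⟨htM, htu, htC⟩
        have := hsub ⟨htM, htu⟩
        simp only [Finset.mem_insert, mem_iUnion, exists_prop] at this ⊢
        obtain ⟨p, hp | hp, htp⟩ := this
        · exact absurd (hp ▸ htp) htC
        · exact ⟨p, hp, htp⟩
      obtain ⟨p, hp, v, hv, hvne, hvsub⟩ :=
        ih (u ∩ (C a)ᶜ) (hu.inter (hC a).isOpen_compl) hcase hsub'
      exact ⟨p, Finset.mem_insert_of_mem hp, v, hv, hvne, hvsub⟩
    · refine ⟨a, Finset.mem_insert_self a s, u, hu, hne, ?_⟩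
      intro t ht
      by_contra htC
      exact hcase ⟨t, ht.1, ht.2, htC⟩

/-- An indecomposable continuum remains preconnected after removing a finite set. -/
lemma aux_remove_finite {M : Set ℂ} (hMc : IsCompact M) (hMpc : IsPreconnected M)
    (hMind : IsIndecomposable M) {F : Set ℂ} (hF : F.Finite) (hFM : F ⊆ M) :
    IsPreconnected (M \ F) := by
  by_contra h
  unfold IsPreconnected at h
  push_neg at h
  obtain ⟨u, v, hu, hv, hcover, h1, h2, h3⟩ := h
  have hMcl : IsClosed M := hMc.isClosed
  set A' : Set ℂ := (M \ F) ∩ u with hA'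
  set B' : Set ℂ := (M \ F) ∩ v with hB'
  have hA'M : A' ⊆ M := fun t ht => ht.1.1
  have hB'M : B' ⊆ M := fun t ht => ht.1.1
  have hA'v : A' ∩ v = ∅ := by
    rw [Set.eq_empty_iff_forall_notMem]
    rintro t ⟨⟨htMF, htu⟩, htv⟩
    have : t ∈ (M \ F) ∩ (u ∩ v) := ⟨htMF, htu, htv⟩
    rw [h3] at this; exact this
  have hB'u : B' ∩ u = ∅ := by
    rw [Set.eq_empty_iff_forall_notMem]
    rintro t ⟨⟨htMF, htv⟩, htu⟩
    have : t ∈ (M \ F) ∩ (u ∩ v) := ⟨htMF, htu, htv⟩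
    rw [h3] at this; exact this
  have hclAB : closure A' ∩ B' = ∅ := by
    rw [Set.eq_empty_iff_forall_notMem]
    rintro t ⟨htcl, htB⟩
    rw [mem_closure_iff] at htcl
    obtain ⟨w, hwv, hwA⟩ := htcl v hv htB.2
    have : w ∈ A' ∩ v := ⟨hwA, hwv⟩
    rw [hA'v] at this; exact this
  have hAclB : A' ∩ closure B' = ∅ := by
    rw [Set.eq_empty_iff_forall_notMem]
    rintro t ⟨htA, htcl⟩
    rw [mem_closure_iff] at htcl
    obtain ⟨w, hwu, hwB⟩ := htcl u hu htA.2
    have : w ∈ B' ∩ u := ⟨hwB, hwu⟩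
    rw [hB'u] at this; exact this
  have hMsplit : M = A' ∪ B' ∪ F := by
    apply Subset.antisymm
    · intro m hm
      by_cases hmF : m ∈ F
      · exact Or.inr hmF
      · rcases hcover ⟨hm, hmF⟩ with h | h
        · exact Or.inl (Or.inl ⟨⟨hm, hmF⟩, h⟩)
        · exact Or.inl (Or.inr ⟨⟨hm, hmF⟩, h⟩)
    · exact union_subset (union_subset hA'M hB'M) hFM
  set P : Set ℂ := closure A' with hP
  have hPM : P ⊆ M := closure_minimal hA'M hMcl
  have hPAF : P ⊆ A' ∪ F := by
    intro t ht
    rcases hMsplit ▸ hPM ht with (h | h) | h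
    · exact Or.inl h
    · have : t ∈ closure A' ∩ B' := ⟨ht, h⟩
      rw [hclAB] at this; exact this.elim
    · exact Or.inr h
  obtain ⟨b, hbB⟩ := h2
  have hbB' : b ∈ B' := hbB
  have hbP : b ∉ P := fun h => by
    have : b ∈ closure A' ∩ B' := ⟨h, hbB'⟩
    rw [hclAB] at this; exact this
  have hPneq : P ≠ M := fun h => hbP (h ▸ hB'M hbB')
  have hFr : P ∩ closure (M \ P) ⊆ F := by
    have hMP : M \ P ⊆ B' ∪ F := by
      rintro t ⟨htM, htP⟩
      rcases hMsplit ▸ htM with (h | h) | h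
      · exact absurd (subset_closure h) htP
      · exact Or.inl h
      · exact Or.inr h
    have hclMP : closure (M \ P) ⊆ closure B' ∪ F :=
      closure_minimal (hMP.trans (union_subset_union_left F subset_closure))
        (isClosed_closure.union hF.isClosed)
    rintro t ⟨htP, htcl⟩
    rcases hclMP htcl with h | h
    · rcases hPAF htP with h' | h'
      · have : t ∈ A' ∩ closure B' := ⟨h', h⟩
        rw [hAclB] at this; exact this.elim
      · exact h'
    · exact h
  have hCcl : ∀ p : ℂ, IsClosed (connectedComponentIn P p) := by
    intro p
    by_cases hp : p ∈ P
    · apply isClosed_of_closure_subset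
      have h1' : IsPreconnected (closure (connectedComponentIn P p)) :=
        isPreconnected_connectedComponentIn.closure
      have h2' : closure (connectedComponentIn P p) ⊆ P :=
        closure_minimal (connectedComponentIn_subset P p) isClosed_closure
      exact h1'.subset_connectedComponentIn
        (subset_closure (mem_connectedComponentIn hp)) h2'
    · rw [connectedComponentIn_eq_empty hp]
      exact isClosed_empty
  set s : Finset ℂ := (hF.inter_of_left P).toFinset with hs
  have hPcomps : P ⊆ ⋃ p ∈ s, connectedComponentIn P p := by
    intro z hzP
    obtain ⟨p, hpcc, hpcl⟩ := aux_bb hMc hMpc hPM isClosed_closure hPneq hzP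
    have hpP : p ∈ P := connectedComponentIn_subset P z hpcc
    have hpF : p ∈ F := hFr ⟨hpP, hpcl⟩
    have heq : connectedComponentIn P z = connectedComponentIn P p :=
      connectedComponentIn_eq hpcc
    simp only [mem_iUnion, exists_prop]
    exact ⟨p, by rw [hs, Set.Finite.mem_toFinset]; exact ⟨hpF, hpP⟩,
      heq ▸ mem_connectedComponentIn hzP⟩
  have hA'open : A' = M ∩ (u ∩ Fᶜ) := by
    ext t
    constructor
    · rintro ⟨⟨htM, htF⟩, htu⟩; exact ⟨htM, htu, htF⟩
    · rintro ⟨htM, htu, htF⟩; exact ⟨⟨htM, htF⟩, htu⟩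
  obtain ⟨p, hps, v', hv', hv'ne, hv'sub⟩ :=
    aux_fin s (fun p => connectedComponentIn P p) hCcl (u ∩ Fᶜ)
      (hu.inter hF.isClosed.isOpen_compl) (by rw [← hA'open]; exact h1)
      (by rw [← hA'open]; exact subset_closure.trans hPcomps)
  rw [hs, Set.Finite.mem_toFinset] at hps
  exact aux_empty_interior hMcl hMpc hMind
    ((connectedComponentIn_subset P p).trans hPM) (hCcl p)
    isPreconnected_connectedComponentIn
    ⟨p, mem_connectedComponentIn hps.2⟩
    (fun h => hbP (connectedComponentIn_subset P p (h.symm ▸ hB'M hbB')))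
    hv' hv'ne hv'sub

/-- if `M ⊆ ∂X` is an indecomposable continuum contained in the
boundary of `X`, then `M ⊆ F_x` for every `x ∈ M`; in particular all these
fibers are nontrivial. -/
theorem stmt_12 (X : Set ℂ) (hcomp : IsCompact X) (hconn : IsConnected X)
    (hfin : (comps (Xᶜ : Set ℂ)).Finite)
    (M : Set ℂ) (hM : M ⊆ frontier X) (hMcomp : IsCompact M)
    (hMconn : IsConnected M) (hMind : IsIndecomposable M) :
    ∀ x ∈ M, M ⊆ fiber X x ∧ fiber X x ≠ {x} := by
  intro x hx
  have hXcl : IsClosed X := hcomp.isClosed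
  have hMX : M ⊆ X := fun y hy => hXcl.closure_eq ▸ frontier_subset_closure (hM hy)
  have hMpf : M ⊆ pseudoFiber X x := by
    intro y hy
    refine ⟨hMX hy, ?_⟩
    rintro ⟨γ, hγ, hxγ, hyγ, hne⟩
    set Ω : Set ℂ := {z : ℂ | (z : OnePoint ℂ) ∉ γ} with hΩ
    set F : Set ℂ := {z ∈ M | (z : OnePoint ℂ) ∈ γ} with hFdef
    have hFM : F ⊆ M := fun z hz => hz.1
    have hFfin : F.Finite := by
      have hinj : Function.Injective (fun z : ℂ => (z : OnePoint ℂ)) := OnePoint.coe_injective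
      have hsub : F ⊆ (fun z : ℂ => (z : OnePoint ℂ)) ⁻¹' (γ ∩ emb (frontier X)) :=
        fun z hz => ⟨hz.2, ⟨z, hM hz.1, rfl⟩⟩
      exact (hγ.2.2.1.preimage hinj.injOn).subset hsub
    have hpc : IsPreconnected (M \ F) :=
      aux_remove_finite hMcomp hMconn.isPreconnected hMind hFfin hFM
    have hsubΩ : M \ F ⊆ Ω := by
      rintro z ⟨hzM, hzF⟩ hmem
      exact hzF ⟨hzM, hmem⟩
    have hxMF : x ∈ M \ F := ⟨hx, fun h => hxγ h.2⟩
    have hyMF : y ∈ M \ F := ⟨hy, fun h => hyγ h.2⟩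
    have h1 : M \ F ⊆ connectedComponentIn Ω x :=
      hpc.subset_connectedComponentIn hxMF hsubΩ
    exact hne (connectedComponentIn_eq (h1 hyMF))
  have hMfib : M ⊆ fiber X x :=
    hMconn.isPreconnected.subset_connectedComponentIn hx hMpf
  refine ⟨hMfib, fun hcontra => ?_⟩
  obtain ⟨a, ha, b, hb, hab⟩ := hMind.1
  have hax : a = x := by
    have := hMfib ha
    rw [hcontra] at this
    exact this
  have hbx : b = x := by
    have := hMfib hb
    rw [hcontra] at this
    exact this
  exact hab (hax.trans hbx.symm)
end
end

section
/- Let x₀ ∈ ℂ, let L = {x₀ + t·i : t ∈ [0,1]}, and let g : ℂ̂ → ℂ̂ be a continuous surjection of the extended plane such that g⁻¹({x₀}) = L and g⁻¹({x}) is a singleton for every x ≠ x₀. Let X ⊆ ℂ̂ be a locally connected continuum with x₀ ∈ X such that the closure of g⁻¹(X) \ L meets L exactly in the two points x₀ and x₀ + i. Then g⁻¹(X) is a locally connected continuum. -/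
open Set Topology OnePoint

noncomputable section

/-- The closed vertical segment `L` from `x₀` to `x₀ + i`, inside the extended
plane. -/
def seg (x₀ : ℂ) : Set (OnePoint ℂ) :=
  (fun t : ℝ => ((x₀ + t * Complex.I : ℂ) : OnePoint ℂ)) '' Icc (0 : ℝ) 1

/-- The open vertical segment `L°` from `x₀` to `x₀ + i`, inside the extended
plane. -/
def segO (x₀ : ℂ) : Set (OnePoint ℂ) :=
  (fun t : ℝ => ((x₀ + t * Complex.I : ℂ) : OnePoint ℂ)) '' Ioo (0 : ℝ) 1

/-!
The map `g` is closed and its fibres (points and the arc `L`) are connected, so preimages of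
connected sets are connected. This gives the connectedness of `g⁻¹(X)`, and its local
connectedness at points off `L`, whose fibres are single points.

At `p ∈ L`, put `D = closure (g⁻¹(X) \ L)` and take a small open `B ∋ p` whose closure meets the
finite set `D ∩ L` only at `p`. Since `D ∩ ∂B` misses `L`, there is a neighbourhood `U` of `x₀` in
`X` avoiding `g(D ∩ ∂B)`, and by local connectedness of `X` every `w ∈ U \ {x₀}` lies in a
connected `Q ⊆ U \ {x₀}` accumulating at `x₀`. The connected set `g⁻¹(Q) ⊆ D` cannot cross `∂B`,
so if it meets `B` it stays in `B` and accumulates at `p`. Together with the local connectedness of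
`L` at `p`, this puts `g⁻¹(U) ∩ B` inside the component of `p` in `g⁻¹(U) ∩ F`, for a closed
neighbourhood `F ⊇ closure B` of `p` chosen beforehand.
-/

open Filter

section LocallyConnectedAt

variable {α β : Type*} [TopologicalSpace α] [TopologicalSpace β]

def IsLocallyConnectedAt (S : Set α) (x : α) : Prop :=
  ∀ N ∈ 𝓝[S] x, ∃ V ∈ 𝓝[S] x, IsPreconnected V ∧ V ⊆ N ∩ S

theorem locallyConnectedSpace_subtype_iff {S : Set α} :
    LocallyConnectedSpace S ↔ ∀ x ∈ S, IsLocallyConnectedAt S x := by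
  rw [locallyConnectedSpace_iff_connected_subsets]
  constructor
  · intro h x hx N hN
    obtain ⟨V, hV, hVc, hVN⟩ := h ⟨x, hx⟩ (Subtype.val ⁻¹' N) (preimage_coe_mem_nhds_subtype.2 hN)
    refine ⟨Subtype.val '' V, ?_, IsInducing.subtypeVal.isPreconnected_image.2 hVc, ?_⟩
    · simpa only [Subtype.range_coe] using IsInducing.subtypeVal.image_mem_nhdsWithin hV
    · rintro _ ⟨v, hv, rfl⟩
      exact ⟨hVN hv, v.2⟩
  · intro h x N hN
    obtain ⟨V, hV, hVc, hVN⟩ := h x x.2 _ <| by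
      simpa only [Subtype.range_coe] using IsInducing.subtypeVal.image_mem_nhdsWithin hN
    refine ⟨Subtype.val ⁻¹' V, preimage_coe_mem_nhds_subtype.2 hV, ?_, ?_⟩
    · rwa [← IsInducing.subtypeVal.isPreconnected_image, Subtype.image_preimage_coe,
        inter_eq_right.2 (hVN.trans inter_subset_right)]
    · intro y hy
      obtain ⟨z, hz, hzy⟩ := (hVN hy).1
      rwa [← Subtype.ext hzy]

theorem Topology.IsInducing.isLocallyConnectedAt_image {f : α → β} (hf : IsInducing f)
    {S : Set α} {x : α} (h : IsLocallyConnectedAt S x) : IsLocallyConnectedAt (f '' S) (f x) := by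
  intro N hN
  rw [← hf.map_nhdsWithin_eq] at hN ⊢
  obtain ⟨V, hV, hVc, hVN⟩ := h _ hN
  refine ⟨f '' V, image_mem_map hV, hVc.image f hf.continuous.continuousOn, ?_⟩
  rintro _ ⟨v, hv, rfl⟩
  exact ⟨(hVN hv).1, mem_image_of_mem f (hVN hv).2⟩

theorem IsLocallyConnectedAt.exists_isOpen_inter_subset_connectedComponentIn {L F : Set α}
    {p : α} (h : IsLocallyConnectedAt L p) (hpL : p ∈ L) (hF : F ∈ 𝓝 p) :
    ∃ B, IsOpen B ∧ p ∈ B ∧ B ⊆ F ∧ B ∩ L ⊆ connectedComponentIn (F ∩ L) p := by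
  obtain ⟨T, hT, hTc, hTF⟩ := h F (mem_nhdsWithin_of_mem_nhds hF)
  obtain ⟨O, hOo, hpO, hOT⟩ := mem_nhdsWithin.1 hT
  refine ⟨O ∩ interior F, hOo.inter isOpen_interior, ⟨hpO, mem_interior_iff_mem_nhds.2 hF⟩,
    inter_subset_right.trans interior_subset, fun z hz => ?_⟩
  exact hTc.subset_connectedComponentIn (mem_of_mem_nhdsWithin hpL hT) hTF (hOT ⟨hz.1.1, hz.2⟩)

theorem Set.OrdConnected.isLocallyConnectedAt {S : Set ℝ} (hS : S.OrdConnected) (t : ℝ) :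
    IsLocallyConnectedAt S t := by
  intro N hN
  obtain ⟨ε, hε, hεN⟩ := Metric.mem_nhdsWithin_iff.1 hN
  refine ⟨S ∩ Metric.ball t ε, inter_mem_nhdsWithin S (Metric.ball_mem_nhds t hε), ?_,
    fun y hy => ⟨hεN ⟨hy.2, hy.1⟩, hy.1⟩⟩
  rw [Real.ball_eq_Ioo]
  exact (hS.inter ordConnected_Ioo).isPreconnected

end LocallyConnectedAt

section Accumulation

variable {α : Type*} [TopologicalSpace α] [T1Space α]

theorem mem_closure_connectedComponentIn_diff_singleton_s15
    [LocallyConnectedSpace α] {U : Set α} (hU : IsPreconnected U) (hUo : IsOpen U) {e w : α}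
    (he : e ∈ U) (hw : w ∈ U) (hwe : w ≠ e) :
    e ∈ closure (connectedComponentIn (U \ {e}) w) := by
  set Q := connectedComponentIn (U \ {e}) w
  have hwQ : w ∈ Q := mem_connectedComponentIn ⟨hw, hwe⟩
  by_contra heQ
  have hclosure : closure Q ∩ U ⊆ Q := by
    rintro y ⟨hyQ, hyU⟩
    have hye : y ≠ e := by rintro rfl; exact heQ hyQ
    have hQy : IsPreconnected (insert y Q) :=
      isPreconnected_connectedComponentIn.subset_closure (subset_insert y Q)
        (insert_subset hyQ subset_closure)
    refine hQy.subset_connectedComponentIn (mem_insert_of_mem y hwQ) ?_ (mem_insert y Q)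
    exact insert_subset ⟨hyU, hye⟩ (connectedComponentIn_subset _ _)
  have hUQ : U ⊆ Q :=
    hU.subset_of_closure_inter_subset (hUo.sdiff isClosed_singleton).connectedComponentIn
      ⟨w, hw, hwQ⟩ hclosure
  exact (connectedComponentIn_subset _ _ (hUQ he)).2 rfl

theorem exists_mem_nhdsWithin_forall_exists_isPreconnected_mem_closure {X : Set α}
    [LocallyConnectedSpace X] {e : α} (he : e ∈ X) {M : Set α} (hM : M ∈ 𝓝[X] e) :
    ∃ U ∈ 𝓝[X] e, U ⊆ M ∩ X ∧ ∀ w ∈ U, w ≠ e →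
      ∃ Q, IsPreconnected Q ∧ w ∈ Q ∧ Q ⊆ U \ {e} ∧ e ∈ closure Q := by
  obtain ⟨U, hUM, hUo, heU, hUc⟩ := locallyConnectedSpace_iff_subsets_isOpen_isConnected.1
    ‹_› ⟨e, he⟩ _ (preimage_coe_mem_nhds_subtype.2 hM)
  refine ⟨Subtype.val '' U, ?_, ?_, ?_⟩
  · simpa only [Subtype.range_coe] using
      IsInducing.subtypeVal.image_mem_nhdsWithin (hUo.mem_nhds heU)
  · rintro _ ⟨u, hu, rfl⟩
    exact ⟨hUM hu, u.2⟩
  · rintro _ ⟨w, hw, rfl⟩ hwe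
    have hwe' : w ≠ ⟨e, he⟩ := fun h => hwe (congrArg Subtype.val h)
    refine ⟨Subtype.val '' connectedComponentIn (U \ {⟨e, he⟩}) w,
      IsInducing.subtypeVal.isPreconnected_image.2 isPreconnected_connectedComponentIn,
      mem_image_of_mem _ (mem_connectedComponentIn ⟨hw, hwe'⟩), ?_, ?_⟩
    · rintro _ ⟨q, hq, rfl⟩
      have hq' := connectedComponentIn_subset _ _ hq
      exact ⟨mem_image_of_mem _ hq'.1, fun h => hq'.2 (Subtype.ext h)⟩
    · exact closure_subtype.1
        (mem_closure_connectedComponentIn_diff_singleton_s15 hUc.isPreconnected hUo heU hw hwe')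

end Accumulation

theorem IsPreconnected.subset_of_disjoint_frontier {α : Type*} [TopologicalSpace α] {s u : Set α}
    (hs : IsPreconnected s) (hu : IsOpen u) (hsu : (s ∩ u).Nonempty)
    (hfr : Disjoint s (frontier u)) : s ⊆ u :=
  hs.subset_of_closure_inter_subset hu hsu fun _ ⟨hyc, hys⟩ => by_contra fun hyu =>
    disjoint_left.1 hfr hys (hu.frontier_eq ▸ ⟨hyc, hyu⟩)

section MonotoneMap

variable {α β : Type*} [TopologicalSpace α] [TopologicalSpace β] {g : α → β}

theorem IsPreconnected.preimage_of_isClosedMap_of_isPreconnected_fiber {s : Set β}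
    (hs : IsPreconnected s) (hg : IsClosedMap g) (hsg : s ⊆ range g)
    (hfib : ∀ y ∈ s, IsPreconnected (g ⁻¹' {y})) : IsPreconnected (g ⁻¹' s) :=
  isPreconnected_closed_iff.2 fun u v hu hv hsuv hsu hsv => by
    replace hsg : g '' (g ⁻¹' s) = s := image_preimage_eq_of_subset hsg
    obtain ⟨y, hys, ⟨a, hau, hay⟩, ⟨b, hbv, hby⟩⟩ : (s ∩ (g '' u ∩ g '' v)).Nonempty := by
      refine isPreconnected_closed_iff.1 hs (g '' u) (g '' v) (hg u hu) (hg v hv) ?_ ?_ ?_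
      · simpa only [hsg, image_union] using image_mono (f := g) hsuv
      · simpa only [image_preimage_inter] using hsu.image g
      · simpa only [image_preimage_inter] using hsv.image g
    have hfs : g ⁻¹' {y} ⊆ g ⁻¹' s := preimage_mono (singleton_subset_iff.2 hys)
    obtain ⟨x, hx, hxuv⟩ := isPreconnected_closed_iff.1 (hfib y hys) u v hu hv
      (hfs.trans hsuv) ⟨a, hay, hau⟩ ⟨b, hby, hbv⟩
    exact ⟨x, hfs hx, hxuv⟩

theorem isLocallyConnectedAt_preimage_of_preimage_singleton_eq (hg : Continuous g)
    (hgc : IsClosedMap g) (hgs : Function.Surjective g)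
    (hfib : ∀ y, IsPreconnected (g ⁻¹' {y})) {X : Set β} {p : α} (hp : g ⁻¹' {g p} = {p})
    (hX : IsLocallyConnectedAt X (g p)) : IsLocallyConnectedAt (g ⁻¹' X) p := by
  have hnhds : 𝓝[g ⁻¹' X] p = comap g (𝓝[X] (g p)) := by
    rw [nhdsWithin, nhdsWithin, comap_inf, comap_principal, hgc.comap_nhds_eq hg, hp,
      nhdsSet_singleton]
  intro N hN
  rw [hnhds] at hN ⊢
  obtain ⟨M, hM, hMN⟩ := hN
  obtain ⟨V, hV, hVc, hVM⟩ := hX M hM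
  refine ⟨g ⁻¹' V, preimage_mem_comap hV, ?_, fun x hx => ⟨hMN (hVM hx).1, (hVM hx).2⟩⟩
  exact hVc.preimage_of_isClosedMap_of_isPreconnected_fiber hgc (hgs.range_eq ▸ subset_univ _)
    fun y _ => hfib y

theorem IsPreconnected.preimage_subset_and_isPreconnected_insert (hg : Continuous g)
    (hgc : IsClosedMap g) (hgs : Function.Surjective g) (hfib : ∀ y, IsPreconnected (g ⁻¹' {y}))
    {X Q : Set β} {e : β} {B : Set α} {p : α} (hQ : IsPreconnected Q) (heQ : e ∈ closure Q)
    (hQX : Q ⊆ X \ {e}) (hB : IsOpen B) (hQB : (g ⁻¹' Q ∩ B).Nonempty)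
    (hQA : Disjoint Q (g '' (closure (g ⁻¹' X \ g ⁻¹' {e}) ∩ frontier B)))
    (hp : ∀ y ∈ closure (g ⁻¹' X \ g ⁻¹' {e}) ∩ g ⁻¹' {e} ∩ closure B, y = p) :
    g ⁻¹' Q ⊆ B ∧ IsPreconnected (insert p (g ⁻¹' Q)) := by
  have hQ' : IsPreconnected (g ⁻¹' Q) :=
    hQ.preimage_of_isClosedMap_of_isPreconnected_fiber hgc (hgs.range_eq ▸ subset_univ _)
      fun y _ => hfib y
  have hQD : g ⁻¹' Q ⊆ closure (g ⁻¹' X \ g ⁻¹' {e}) := fun y hy =>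
    subset_closure ⟨(hQX hy).1, (hQX hy).2⟩
  have hQB' : g ⁻¹' Q ⊆ B := hQ'.subset_of_disjoint_frontier hB hQB <|
    disjoint_left.2 fun y hy hyB => disjoint_left.1 hQA hy ⟨y, ⟨hQD hy, hyB⟩, rfl⟩
  obtain ⟨y, hy, hye⟩ : e ∈ g '' closure (g ⁻¹' Q) := by
    rwa [← hgc.closure_image_eq_of_continuous hg, image_preimage_eq Q hgs]
  have hpQ : p ∈ closure (g ⁻¹' Q) := by
    rwa [← hp y ⟨⟨closure_minimal hQD isClosed_closure hy, hye⟩, closure_mono hQB' hy⟩]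
  exact ⟨hQB', hQ'.subset_closure (subset_insert _ _) (insert_subset hpQ subset_closure)⟩

theorem isLocallyConnectedAt_preimage_of_finite_closure_inter_fiber [T3Space α] [T1Space β]
    (hg : Continuous g) (hgc : IsClosedMap g) (hgs : Function.Surjective g)
    (hfib : ∀ y, IsPreconnected (g ⁻¹' {y})) {X : Set β} [LocallyConnectedSpace X] {e : β}
    (he : e ∈ X) (hE : (closure (g ⁻¹' X \ g ⁻¹' {e}) ∩ g ⁻¹' {e}).Finite) {p : α}
    (hp : g p = e) (hLp : IsLocallyConnectedAt (g ⁻¹' {e}) p) :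
    IsLocallyConnectedAt (g ⁻¹' X) p := by
  set L := g ⁻¹' {e}
  set D := closure (g ⁻¹' X \ L)
  have hpL : p ∈ L := hp
  intro N hN
  obtain ⟨W, hWo, hpW, hWN⟩ := mem_nhdsWithin.1 hN
  have hEp : IsClosed ((D ∩ L) \ {p}) := (hE.subset sdiff_subset).isClosed
  obtain ⟨F, hF, hFc, hFsub⟩ := exists_mem_nhds_isClosed_subset <| inter_mem (hWo.mem_nhds hpW)
    (hEp.isOpen_compl.mem_nhds fun h => h.2 rfl)
  obtain ⟨B, hBo, hpB, hBF, hBL⟩ :=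
    hLp.exists_isOpen_inter_subset_connectedComponentIn hpL hF
  replace hBF : closure B ⊆ F := closure_minimal hBF hFc
  have hDLB : ∀ y ∈ D ∩ L ∩ closure B, y = p := fun y hy =>
    by_contra fun h => (hFsub (hBF hy.2)).2 ⟨hy.1, h⟩
  have heA : e ∉ g '' (D ∩ frontier B) := by
    rintro ⟨a, ⟨haD, haB⟩, hae⟩
    rw [hBo.frontier_eq] at haB
    exact haB.2 (hDLB a ⟨⟨haD, hae⟩, haB.1⟩ ▸ hpB)
  obtain ⟨U, hU, hUsub, hUacc⟩ :=
    exists_mem_nhdsWithin_forall_exists_isPreconnected_mem_closure he <| mem_nhdsWithin_of_mem_nhds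
      ((hgc _ (isClosed_closure.inter isClosed_frontier)).isOpen_compl.mem_nhds heA)
  have hLU : L ⊆ g ⁻¹' U := fun y (hy : g y = e) => by
    rw [mem_preimage, hy]
    exact mem_of_mem_nhdsWithin he hU
  have hsubC : g ⁻¹' U ∩ B ⊆ connectedComponentIn (g ⁻¹' U ∩ F) p := by
    rintro z ⟨hzU, hzB⟩
    by_cases hzL : z ∈ L
    · have hFL : F ∩ L ⊆ g ⁻¹' U ∩ F := fun y hy => ⟨hLU hy.2, hy.1⟩
      exact connectedComponentIn_mono p hFL (hBL ⟨hzB, hzL⟩)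
    obtain ⟨Q, hQc, hzQ, hQU, heQ⟩ := hUacc (g z) hzU hzL
    obtain ⟨hQB, hQp⟩ := hQc.preimage_subset_and_isPreconnected_insert hg hgc hgs hfib heQ
      (fun y hy => ⟨(hUsub (hQU hy).1).2, (hQU hy).2⟩) hBo ⟨z, hzQ, hzB⟩
      (disjoint_left.2 fun y hy => (hUsub (hQU hy).1).1) hDLB
    refine hQp.subset_connectedComponentIn (mem_insert _ _) ?_ (mem_insert_of_mem _ hzQ)
    exact insert_subset ⟨hLU hpL, mem_of_mem_nhds hF⟩ fun y hy =>
      ⟨(hQU hy).1, hBF (subset_closure (hQB hy))⟩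
  have hUK : g ⁻¹' U ∈ 𝓝[g ⁻¹' X] p :=
    hg.continuousWithinAt.tendsto_nhdsWithin (mapsTo_preimage g X) (hp ▸ hU)
  refine ⟨_, mem_of_superset (inter_mem hUK (mem_nhdsWithin_of_mem_nhds (hBo.mem_nhds hpB))) hsubC,
    isPreconnected_connectedComponentIn, fun y hy => ?_⟩
  have hy' := connectedComponentIn_subset _ _ hy
  have hyX : y ∈ g ⁻¹' X := (hUsub hy'.1).2
  exact ⟨hWN ⟨(hFsub hy'.2).1, hyX⟩, hyX⟩

end MonotoneMap

def vertLine (x₀ : ℂ) (t : ℝ) : OnePoint ℂ := ((x₀ + t * Complex.I : ℂ) : OnePoint ℂ)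

theorem isEmbedding_vertLine (x₀ : ℂ) : IsEmbedding (vertLine x₀) := by
  refine OnePoint.isOpenEmbedding_coe.isEmbedding.comp (Isometry.isEmbedding ?_)
  refine Isometry.of_dist_eq fun a b => ?_
  rw [Complex.dist_eq, add_sub_add_left_eq_sub, ← sub_mul, norm_mul, Complex.norm_I, mul_one,
    ← Complex.ofReal_sub, Complex.norm_real, Real.dist_eq, Real.norm_eq_abs]

theorem isPreconnected_seg (x₀ : ℂ) : IsPreconnected (seg x₀) :=
  isPreconnected_Icc.image _ (isEmbedding_vertLine x₀).continuous.continuousOn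

theorem isLocallyConnectedAt_seg {x₀ : ℂ} {p : OnePoint ℂ} (hp : p ∈ seg x₀) :
    IsLocallyConnectedAt (seg x₀) p := by
  obtain ⟨t, -, rfl⟩ := hp
  exact (isEmbedding_vertLine x₀).isInducing.isLocallyConnectedAt_image
    (ordConnected_Icc.isLocallyConnectedAt t)

/-- under the collapsing map `g`, if `X` is a locally connected
continuum with `x₀ ∈ X` and `closure (g⁻¹(X) \ L) ∩ L = {x₀, x₀ + i}`, then
`g⁻¹(X)` is a locally connected continuum. -/
theorem stmt_15 (x₀ : ℂ) (g : OnePoint ℂ → OnePoint ℂ)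
    (hgc : Continuous g) (hgs : Function.Surjective g)
    (hgL : g ⁻¹' {((x₀ : ℂ) : OnePoint ℂ)} = seg x₀)
    (hginj : ∀ x : OnePoint ℂ, x ≠ ((x₀ : ℂ) : OnePoint ℂ) → ∃ y, g ⁻¹' {x} = {y})
    (X : Set (OnePoint ℂ)) (hcomp : IsCompact X) (hconn : IsConnected X)
    (hlc : LocallyConnectedSpace ↥X)
    (hx₀ : ((x₀ : ℂ) : OnePoint ℂ) ∈ X)
    (hcl : closure (g ⁻¹' X \ seg x₀) ∩ seg x₀ =
      {((x₀ : ℂ) : OnePoint ℂ), ((x₀ + Complex.I : ℂ) : OnePoint ℂ)}) :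
    IsCompact (g ⁻¹' X) ∧ IsConnected (g ⁻¹' X) ∧
      LocallyConnectedSpace ↥(g ⁻¹' X) := by
  have hgc' : IsClosedMap g := hgc.isClosedMap
  have hfib : ∀ y, IsPreconnected (g ⁻¹' {y}) := by
    intro y
    by_cases hy : y = x₀
    · rw [hy, hgL]
      exact isPreconnected_seg x₀
    · obtain ⟨z, hz⟩ := hginj y hy
      rw [hz]
      exact isPreconnected_singleton
  refine ⟨(hcomp.isClosed.preimage hgc).isCompact, ⟨hconn.nonempty.preimage hgs,
    hconn.isPreconnected.preimage_of_isClosedMap_of_isPreconnected_fiber hgc'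
      (hgs.range_eq ▸ subset_univ _) fun y _ => hfib y⟩, ?_⟩
  refine locallyConnectedSpace_subtype_iff.2 fun p hp => ?_
  by_cases hpL : p ∈ seg x₀
  · have hE : (closure (g ⁻¹' X \ g ⁻¹' {↑x₀}) ∩ g ⁻¹' {↑x₀}).Finite := by
      rw [hgL, hcl]
      exact toFinite _
    refine isLocallyConnectedAt_preimage_of_finite_closure_inter_fiber hgc hgc' hgs hfib hx₀ hE
      (hgL ▸ hpL : p ∈ g ⁻¹' {(x₀ : OnePoint ℂ)}) ?_
    rw [hgL]
    exact isLocallyConnectedAt_seg hpL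
  · obtain ⟨q, hq⟩ := hginj (g p) fun h => hpL (hgL ▸ h)
    obtain rfl : p = q := hq.subset (mem_preimage.2 rfl)
    exact isLocallyConnectedAt_preimage_of_preimage_singleton_eq hgc hgc' hgs hfib hq
      (locallyConnectedSpace_subtype_iff.1 hlc _ hp)
end
end
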